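/- arXiv:1802.00250 — 10 statements merged into one kernel-verified Lean document; each statement's English description precedes it below -/
import Mathlib

section
/- Let θ ≥ 0, let ρ be a d×d density matrix, let C : ℝ → Matrix d d ℂ be continuous with C(t) Hermitian and positive semidefinite for every t, and let R : ℝ → Matrix d d ℂ be differentiable with R(0) = 1 and R'(t) = (θ/2)·C(t)·R(t) for all t. Define E(t) := Re Tr(ρ · R(t)ᴴ · R(t)). Then E(t) > 0 for every t ≥ 0, the function t ↦ ln E(t) is differentiable, and (ln E)'(t) = θ · Re Tr( r(t) · C(t) ), where r(t) := (1/E(t)) · R(t) · ρ · R(t)ᴴ is the modified density matrix. (Finite-dimensional version of Theorem 1: the logarithmic derivative of the quantum risk-sensitive cost equals θ times the modified quantum expectation of C(t).) -/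
open Matrix
open scoped ComplexOrder

attribute [local instance] Matrix.normedAddCommGroup Matrix.normedSpace

/-- A density matrix: positive semidefinite (hence Hermitian) with unit trace. -/
def IsDensityMatrix {d : ℕ} (ρ : Matrix (Fin d) (Fin d) ℂ) : Prop :=
  ρ.PosSemidef ∧ ρ.trace = 1

/-- The continuous linear map extracting the `(k, i)` entry of a matrix. -/
noncomputable def entryCLM {d : ℕ} (k i : Fin d) : Matrix (Fin d) (Fin d) ℂ →L[ℝ] ℂ :=
  LinearMap.toContinuousLinearMap
    { toFun := fun M => M k i
      map_add' := fun _ _ => rfl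
      map_smul' := fun _ _ => rfl }

/-- Product rule for the sesquilinear map `R ↦ Tr(ρ Rᴴ R)`. -/
lemma hasDerivAt_trace_form {d : ℕ} (ρ : Matrix (Fin d) (Fin d) ℂ)
    {R : ℝ → Matrix (Fin d) (Fin d) ℂ} {R' : Matrix (Fin d) (Fin d) ℂ} {t : ℝ}
    (h : HasDerivAt R R' t) :
    HasDerivAt (fun s => Matrix.trace (ρ * (R s)ᴴ * R s))
      (Matrix.trace (ρ * R'ᴴ * R t) + Matrix.trace (ρ * (R t)ᴴ * R')) t := by
  have hEntry : ∀ k i : Fin d, HasDerivAt (fun s => R s k i) (R' k i) t := fun k i => by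
    exact (entryCLM k i).hasFDerivAt.comp_hasDerivAt t h
  have key : HasDerivAt
      (fun s => ∑ i : Fin d, ∑ k : Fin d, ((∑ j : Fin d, ρ i j * star (R s k j)) * R s k i))
      (∑ i : Fin d, ∑ k : Fin d,
        ((∑ j : Fin d, ρ i j * star (R' k j)) * R t k i
          + (∑ j : Fin d, ρ i j * star (R t k j)) * R' k i)) t := by
    apply HasDerivAt.fun_sum; intro i _
    apply HasDerivAt.fun_sum; intro k _
    exact (HasDerivAt.fun_sum fun j _ => ((hEntry k j).star.const_mul (ρ i j))).mul (hEntry k i)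
  convert key using 1
  · simp [Matrix.trace, Matrix.diag, Matrix.mul_apply, Matrix.conjTranspose_apply,
      Finset.sum_add_distrib, Finset.sum_mul, Finset.mul_sum]
  · simp [Matrix.trace, Matrix.diag, Matrix.mul_apply, Matrix.conjTranspose_apply,
      Finset.sum_add_distrib, Finset.sum_mul, Finset.mul_sum]

/-- The trace of a positive semidefinite complex matrix has nonnegative real part. -/
lemma trace_re_nonneg_of_posSemidef {d : ℕ} {M : Matrix (Fin d) (Fin d) ℂ}
    (hM : M.PosSemidef) : 0 ≤ (Matrix.trace M).re := by
  have h : ∀ i, 0 ≤ M i i := fun i => by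
    exact hM.diag_nonneg
  rw [Matrix.trace, Complex.re_sum]
  exact Finset.sum_nonneg fun i _ => (Complex.le_def.mp (h i)).1

/-- Theorem 1, finite-dimensional: the logarithmic derivative of the
quantum risk-sensitive cost `E(t) = Re Tr(ρ R(t)ᴴ R(t))` equals
`θ · Re Tr(r(t) C(t))` where `r(t) = E(t)⁻¹ • R(t) ρ R(t)ᴴ`. -/
theorem risk_sensitive_log_derivative {d : ℕ}
    (θ : ℝ) (hθ : 0 ≤ θ)
    (ρ : Matrix (Fin d) (Fin d) ℂ) (hρ : IsDensityMatrix ρ)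
    (C R : ℝ → Matrix (Fin d) (Fin d) ℂ)
    (hC : Continuous C)
    (hCherm : ∀ t, (C t).IsHermitian) (hCpsd : ∀ t, (C t).PosSemidef)
    (hR0 : R 0 = 1)
    (hR : ∀ t, HasDerivAt R ((θ / 2) • (C t * R t)) t)
    (E : ℝ → ℝ) (hE : ∀ t, E t = (Matrix.trace (ρ * (R t)ᴴ * R t)).re)
    (r : ℝ → Matrix (Fin d) (Fin d) ℂ)
    (hr : ∀ t, r t = (E t)⁻¹ • (R t * ρ * (R t)ᴴ)) :
    ∀ t : ℝ, 0 ≤ t →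
      0 < E t ∧
        HasDerivAt (fun s => Real.log (E s)) (θ * (Matrix.trace (r t * C t)).re) t := by
  -- cyclic identity for the trace
  have cyc : ∀ t, Matrix.trace (ρ * (R t)ᴴ * (C t * R t))
      = Matrix.trace (R t * ρ * (R t)ᴴ * C t) := by
    intro t
    rw [Matrix.trace_mul_cycle ρ ((R t)ᴴ) (C t * R t),
      Matrix.trace_mul_comm (R t * ρ * (R t)ᴴ) (C t)]
    simp only [Matrix.mul_assoc]
  -- derivative of the complex trace
  have hG : ∀ t, HasDerivAt (fun s => Matrix.trace (ρ * (R s)ᴴ * R s))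
      (θ • Matrix.trace (ρ * (R t)ᴴ * (C t * R t))) t := by
    intro t
    have h := hasDerivAt_trace_form ρ (hR t)
    convert h using 1
    rw [Matrix.conjTranspose_smul, Matrix.conjTranspose_mul, (hCherm t).eq]
    simp only [star_trivial, Matrix.mul_smul, Matrix.smul_mul, Matrix.trace_smul]
    rw [show ρ * ((R t)ᴴ * C t) * R t = ρ * (R t)ᴴ * (C t * R t) by
      simp only [Matrix.mul_assoc]]
    rw [← add_smul]
    norm_num
  -- derivative of E
  have hE' : ∀ t, HasDerivAt E (θ * (Matrix.trace (ρ * (R t)ᴴ * (C t * R t))).re) t := by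
    intro t
    have h2 := Complex.reCLM.hasFDerivAt.comp_hasDerivAt t (hG t)
    have hfun : E = fun s => (Matrix.trace (ρ * (R s)ᴴ * R s)).re := funext hE
    rw [hfun]
    exact h2.congr_deriv (by simp [Complex.smul_re])
  -- the derivative has nonnegative real part
  have hTnn : ∀ t, 0 ≤ (Matrix.trace (ρ * (R t)ᴴ * (C t * R t))).re := by
    intro t
    rw [cyc t]
    set S := R t * ρ * (R t)ᴴ with hS
    have hSpsd : S.PosSemidef := hρ.1.mul_mul_conjTranspose_same (R t)
    open scoped MatrixOrder in
    set Q := CFC.sqrt (C t) with hQdef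
    open scoped MatrixOrder in
    have hQ : Q.PosSemidef := (CFC.sqrt_nonneg (C t)).posSemidef
    open scoped MatrixOrder in
    have hsq : Q * Q = C t := CFC.sqrt_mul_sqrt_self (C t) (hCpsd t).nonneg
    have key : Matrix.trace (S * C t) = Matrix.trace (Qᴴ * S * Q) := by
      rw [hQ.isHermitian.eq, ← hsq, Matrix.trace_mul_comm S (Q * Q),
        Matrix.trace_mul_cycle Q S Q]
    rw [key]
    exact trace_re_nonneg_of_posSemidef (hSpsd.conjTranspose_mul_mul_same Q)
  -- E is monotone, hence positive on [0, ∞)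
  have hmono : Monotone E :=
    monotone_of_deriv_nonneg (fun x => (hE' x).differentiableAt)
      (fun x => by rw [(hE' x).deriv]; exact mul_nonneg hθ (hTnn x))
  have hE0 : E 0 = 1 := by
    rw [hE 0, hR0]
    simp [hρ.2]
  intro t ht
  have hpos : 0 < E t := by
    have := hmono ht
    rw [hE0] at this
    linarith
  refine ⟨hpos, ?_⟩
  have hlog := (hE' t).log (ne_of_gt hpos)
  convert hlog using 1
  rw [hr t, Matrix.smul_mul, Matrix.trace_smul, ← cyc t]
  simp only [star_trivial, Complex.smul_re, smul_eq_mul]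
  field_simp
end

section
/- Let θ ∈ ℝ, let S : [0,∞) → Matrix d d ℂ be differentiable with S(t) Hermitian and positive definite for every t, and let Ψ : [0,∞) → Matrix d d ℂ be continuous with Ψ(t) Hermitian and (S²)'(t) = θ · S(t) · Ψ(t) · S(t) for all t. If Q : [0,∞) → Matrix d d ℂ is differentiable with Q(0) = S(0)² and Q'(t) = (θ/2)·( S(t)·Ψ(t)·S(t)⁻¹·Q(t) + Q(t)·S(t)⁻¹·Ψ(t)·S(t) ) for all t, then Q(t) = S(t)² for every t ≥ 0. (Uniqueness step in the proof of Theorem 3: the propagated Gram operator coincides with the squared exponential factor.) -/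
open Matrix Set
open scoped ComplexOrder

attribute [local instance] Matrix.normedAddCommGroup Matrix.normedSpace

/-!
With `A = S Ψ S⁻¹` and `B = S⁻¹ Ψ S`, both `Q` and `S²` solve the linear matrix ODE
`X' = (θ/2) (A X + X B)`: for `S²` because `A S² + S² B = 2 S Ψ S`. The coefficients are
continuous, so on each `[0, t]` the right-hand side is uniformly Lipschitz in `X`, and Grönwall's
uniqueness theorem identifies the two solutions, which agree at `0`.
-/

theorem linear_ODE_solution_unique_of_mem_Icc_right {E : Type*} [NormedAddCommGroup E] [NormedSpace ℝ E]
    {L : ℝ → E →L[ℝ] E} {f g : ℝ → E} {a b : ℝ} (hL : ContinuousOn L (Icc a b))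
    (hf : ContinuousOn f (Icc a b)) (hf' : ∀ t ∈ Ico a b, HasDerivWithinAt f (L t (f t)) (Ici t) t)
    (hg : ContinuousOn g (Icc a b)) (hg' : ∀ t ∈ Ico a b, HasDerivWithinAt g (L t (g t)) (Ici t) t)
    (ha : f a = g a) : EqOn f g (Icc a b) := by
  obtain ⟨K, hK⟩ := isCompact_Icc.exists_bound_of_continuousOn hL
  have hlip : ∀ t ∈ Ico a b, LipschitzOnWith K.toNNReal (L t) univ := fun t ht =>
    ((L t).lipschitz.weaken (by
      rw [← NNReal.coe_le_coe, coe_nnnorm, Real.coe_toNNReal']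
      exact (hK t (Ico_subset_Icc_self ht)).trans (le_max_left K 0))).lipschitzOnWith
  exact ODE_solution_unique_of_mem_Icc_right hlip hf hf' (fun _ _ => mem_univ _) hg hg'
    (fun _ _ => mem_univ _) ha

section Sylvester
variable {n 𝕜 : Type*} [Fintype n] [RCLike 𝕜]

noncomputable def sylvesterCLM :
    (Matrix n n 𝕜 × Matrix n n 𝕜) →ₗ[ℝ] Matrix n n 𝕜 →L[ℝ] Matrix n n 𝕜 :=
  LinearMap.toContinuousLinearMap.toLinearMap ∘ₗ
    (LinearMap.mul ℝ (Matrix n n 𝕜) ∘ₗ LinearMap.fst ℝ _ _ +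
      (LinearMap.mul ℝ (Matrix n n 𝕜)).flip ∘ₗ LinearMap.snd ℝ _ _)

@[simp] lemma sylvesterCLM_apply (A B X : Matrix n n 𝕜) :
    sylvesterCLM (A, B) X = A * X + X * B := rfl

end Sylvester

lemma ContinuousOn.matrix_inv {n 𝕜 X : Type*} [Fintype n] [DecidableEq n] [NormedField 𝕜]
    [TopologicalSpace X] {A : X → Matrix n n 𝕜} {s : Set X}
    (hA : ContinuousOn A s) (hdet : ∀ x ∈ s, (A x).det ≠ 0) :
    ContinuousOn (fun x => (A x)⁻¹) s := fun x hx =>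
  (continuousAt_matrix_inv _ (by rw [Ring.inverse_eq_inv']; exact continuousAt_inv₀ (hdet x hx))
    ).comp_continuousWithinAt (hA x hx)

lemma conj_mul_sq_add_sq_mul_conj {n R : Type*} [Fintype n] [DecidableEq n] [CommRing R]
    {S : Matrix n n R} (hS : IsUnit S.det) (Ψ : Matrix n n R) :
    S * Ψ * S⁻¹ * S ^ 2 + S ^ 2 * (S⁻¹ * Ψ * S) = S * Ψ * S + S * Ψ * S := by
  simp only [sq, ← mul_assoc, mul_nonsing_inv_cancel_right _ _ hS,
    nonsing_inv_mul_cancel_right _ _ hS]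

theorem propagated_gram_eq_squared_exponential_general {d : ℕ}
    (θ : ℝ)
    (S Ψ Q : ℝ → Matrix (Fin d) (Fin d) ℂ)
    (hSdiff : ∀ t ∈ Ici (0 : ℝ), DifferentiableWithinAt ℝ S (Ici (0 : ℝ)) t)
    (hSpos : ∀ t ∈ Ici (0 : ℝ), (S t).IsHermitian ∧ (S t).PosDef)
    (hΨcont : ContinuousOn Ψ (Ici (0 : ℝ)))
    (hS2 : ∀ t ∈ Ici (0 : ℝ),
      HasDerivWithinAt (fun s => S s ^ 2) (θ • (S t * Ψ t * S t)) (Ici (0 : ℝ)) t)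
    (hQ0 : Q 0 = S 0 ^ 2)
    (hQ : ∀ t ∈ Ici (0 : ℝ),
      HasDerivWithinAt Q
        ((θ / 2) • (S t * Ψ t * (S t)⁻¹ * Q t + Q t * (S t)⁻¹ * Ψ t * S t))
        (Ici (0 : ℝ)) t) :
    ∀ t ∈ Ici (0 : ℝ), Q t = S t ^ 2 := by
  intro t ht
  have hdet : ∀ u ∈ Ici (0 : ℝ), IsUnit (S u).det := fun u hu =>
    (hSpos u hu).2.det_pos.ne'.isUnit
  have hScont : ContinuousOn S (Ici 0) := fun u hu => (hSdiff u hu).continuousWithinAt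
  have hSinvcont : ContinuousOn (fun u => (S u)⁻¹) (Ici 0) :=
    hScont.matrix_inv fun u hu => (hdet u hu).ne_zero
  set L : ℝ → Matrix (Fin d) (Fin d) ℂ →L[ℝ] Matrix (Fin d) (Fin d) ℂ := fun u =>
    (θ / 2) • sylvesterCLM (S u * Ψ u * (S u)⁻¹, (S u)⁻¹ * Ψ u * S u)
  have hL : ContinuousOn L (Ici 0) :=
    (sylvesterCLM.continuous_of_finiteDimensional.comp_continuousOn
      (((hScont.mul hΨcont).mul hSinvcont).prodMk ((hSinvcont.mul hΨcont).mul hScont))).const_smul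
      (θ / 2)
  have hQ' : ∀ u ∈ Ici (0 : ℝ), HasDerivWithinAt Q (L u (Q u)) (Ici 0) u := fun u hu => by
    simpa only [L, _root_.smul_apply, sylvesterCLM_apply, mul_assoc] using hQ u hu
  have hS2' : ∀ u ∈ Ici (0 : ℝ),
      HasDerivWithinAt (fun s => S s ^ 2) (L u (S u ^ 2)) (Ici 0) u := fun u hu => by
    convert hS2 u hu using 1
    simp only [L, _root_.smul_apply, sylvesterCLM_apply,
      conj_mul_sq_add_sq_mul_conj (hdet u hu), ← two_smul ℝ, smul_smul]
    norm_num
  refine linear_ODE_solution_unique_of_mem_Icc_right (hL.mono Icc_subset_Ici_self)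
    ((hQ' · ·.1 |>.continuousWithinAt.mono Icc_subset_Ici_self))
    (fun u hu => (hQ' u hu.1).mono (Ici_subset_Ici.mpr hu.1))
    ((hS2' · ·.1 |>.continuousWithinAt.mono Icc_subset_Ici_self))
    (fun u hu => (hS2' u hu.1).mono (Ici_subset_Ici.mpr hu.1)) hQ0 ⟨ht, le_rfl⟩

/-- uniqueness step in Theorem 3: if `(S²)' = θ·S·Ψ·S` on `[0,∞)` and `Q`
solves `Q' = (θ/2)(SΨS⁻¹Q + QS⁻¹ΨS)` with `Q(0) = S(0)²`, then `Q = S²` on `[0,∞)`. -/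
theorem propagated_gram_eq_squared_exponential {d : ℕ}
    (θ : ℝ)
    (S Ψ Q : ℝ → Matrix (Fin d) (Fin d) ℂ)
    (hSdiff : ∀ t ∈ Ici (0 : ℝ), DifferentiableWithinAt ℝ S (Ici (0 : ℝ)) t)
    (hSpos : ∀ t ∈ Ici (0 : ℝ), (S t).IsHermitian ∧ (S t).PosDef)
    (hΨcont : ContinuousOn Ψ (Ici (0 : ℝ)))
    (hΨherm : ∀ t ∈ Ici (0 : ℝ), (Ψ t).IsHermitian)
    (hS2 : ∀ t ∈ Ici (0 : ℝ),
      HasDerivWithinAt (fun s => S s ^ 2) (θ • (S t * Ψ t * S t)) (Ici (0 : ℝ)) t)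
    (hQ0 : Q 0 = S 0 ^ 2)
    (hQ : ∀ t ∈ Ici (0 : ℝ),
      HasDerivWithinAt Q
        ((θ / 2) • (S t * Ψ t * (S t)⁻¹ * Q t + Q t * (S t)⁻¹ * Ψ t * S t))
        (Ici (0 : ℝ)) t) :
    ∀ t ∈ Ici (0 : ℝ), Q t = S t ^ 2 :=
  propagated_gram_eq_squared_exponential_general θ S Ψ Q hSdiff hSpos hΨcont hS2 hQ0 hQ
end

section
/- Let θ ∈ ℝ, let S : [0,∞) → Matrix d d ℂ be differentiable with S(0) = 1 and S(t) Hermitian positive definite for every t, and let Ψ : [0,∞) → Matrix d d ℂ be continuous with Ψ(t) Hermitian and (S²)'(t) = θ · S(t) · Ψ(t) · S(t) for all t. Let R : [0,∞) → Matrix d d ℂ be differentiable with R(0) = 1 and R'(t) = (θ/2) · R(t) · S(t)⁻¹ · Ψ(t) · S(t) for all t. Then for every t ≥ 0: (i) R(t)ᴴ · R(t) = S(t)²; (ii) V(t) := R(t) · S(t)⁻¹ is unitary; (iii) R satisfies R'(t) = (θ/2)·C(t)·R(t) with C(t) := V(t)·Ψ(t)·V(t)ᴴ; and (iv) for every density matrix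 ρ, Re Tr(ρ · R(t)ᴴ · R(t)) = Re Tr(ρ · S(t)²). (Finite-dimensional version of Theorem 3: with the choice C = V Ψ Vᴴ, the original quantum risk-sensitive cost reproduces its quadratic-exponential counterpart, and V remains unitary for all times.) -/
open Matrix Set
open scoped ComplexOrder

attribute [local instance] Matrix.normedAddCommGroup Matrix.normedSpace

namespace RSAux

variable {d : ℕ}

lemma norm_mul_le' (A B : Matrix (Fin d) (Fin d) ℂ) :
    ‖A * B‖ ≤ ((d : ℝ) + 1) * ‖A‖ * ‖B‖ := by
  have h : ∀ i j : Fin d, ‖(A * B) i j‖ ≤ ((d : ℝ) + 1) * ‖A‖ * ‖B‖ := by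
    intro i j
    rw [Matrix.mul_apply]
    calc ‖∑ k, A i k * B k j‖ ≤ ∑ k, ‖A i k * B k j‖ := norm_sum_le _ _
      _ ≤ ∑ _k : Fin d, ‖A‖ * ‖B‖ := by
          refine Finset.sum_le_sum fun k _ => ?_
          rw [norm_mul]
          exact mul_le_mul (A.norm_entry_le_entrywise_sup_norm)
            (B.norm_entry_le_entrywise_sup_norm) (norm_nonneg _) (norm_nonneg _)
      _ = (d : ℝ) * (‖A‖ * ‖B‖) := by simp [Finset.sum_const, mul_comm]
      _ ≤ ((d : ℝ) + 1) * ‖A‖ * ‖B‖ := by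
          rw [mul_assoc]
          refine mul_le_mul_of_nonneg_right (by linarith) (by positivity)
  exact (Matrix.norm_le_iff (by positivity)).2 h

lemma isBoundedBilinearMap_mul :
    IsBoundedBilinearMap ℝ (fun p : Matrix (Fin d) (Fin d) ℂ × Matrix (Fin d) (Fin d) ℂ =>
      p.1 * p.2) where
  add_left x₁ x₂ y := add_mul x₁ x₂ y
  smul_left c x y := smul_mul_assoc c x y
  add_right x y₁ y₂ := mul_add x y₁ y₂
  smul_right c x y := mul_smul_comm c x y
  bound := ⟨(d : ℝ) + 1, by positivity, fun x y => norm_mul_le' x y⟩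

lemma HasDerivWithinAt.matMul {f g : ℝ → Matrix (Fin d) (Fin d) ℂ}
    {f' g' : Matrix (Fin d) (Fin d) ℂ} {s : Set ℝ} {x : ℝ}
    (hf : HasDerivWithinAt f f' s x) (hg : HasDerivWithinAt g g' s x) :
    HasDerivWithinAt (fun u => f u * g u) (f x * g' + f' * g x) s x := by
  have h := (isBoundedBilinearMap_mul (d := d)).hasFDerivAt (f x, g x)
  have h2 := h.comp_hasDerivWithinAt x (hf.prodMk hg)
  exact h2

lemma hasDerivWithinAt_conjTranspose {f : ℝ → Matrix (Fin d) (Fin d) ℂ}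
    {f' : Matrix (Fin d) (Fin d) ℂ} {s : Set ℝ} {x : ℝ}
    (hf : HasDerivWithinAt f f' s x) :
    HasDerivWithinAt (fun u => (f u)ᴴ) f'ᴴ s x := by
  let L : Matrix (Fin d) (Fin d) ℂ →ₗ[ℝ] Matrix (Fin d) (Fin d) ℂ :=
    { toFun := fun A => Aᴴ
      map_add' := fun A B => Matrix.conjTranspose_add A B
      map_smul' := fun r A => by
        show (r • A)ᴴ = (RingHom.id ℝ) r • Aᴴ
        rw [Matrix.conjTranspose_smul, star_trivial, RingHom.id_apply] }
  have hL := (LinearMap.toContinuousLinearMap L).hasFDerivAt (x := f x)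
  have h2 := hL.comp_hasDerivWithinAt x hf
  exact h2

end RSAux

/-- Theorem 3, finite-dimensional: with `C = V Ψ Vᴴ`, `V = R S⁻¹`, the
risk-sensitive cost reproduces the quadratic-exponential one and `V` stays unitary. -/
theorem risk_sensitive_reproduces_quadratic_exponential {d : ℕ}
    (θ : ℝ)
    (S Ψ R : ℝ → Matrix (Fin d) (Fin d) ℂ)
    (hSdiff : ∀ t ∈ Ici (0 : ℝ), DifferentiableWithinAt ℝ S (Ici (0 : ℝ)) t)
    (hS0 : S 0 = 1)
    (hSpos : ∀ t ∈ Ici (0 : ℝ), (S t).IsHermitian ∧ (S t).PosDef)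
    (hΨcont : ContinuousOn Ψ (Ici (0 : ℝ)))
    (hΨherm : ∀ t ∈ Ici (0 : ℝ), (Ψ t).IsHermitian)
    (hS2 : ∀ t ∈ Ici (0 : ℝ),
      HasDerivWithinAt (fun s => S s ^ 2) (θ • (S t * Ψ t * S t)) (Ici (0 : ℝ)) t)
    (hR0 : R 0 = 1)
    (hR : ∀ t ∈ Ici (0 : ℝ),
      HasDerivWithinAt R ((θ / 2) • (R t * (S t)⁻¹ * Ψ t * S t)) (Ici (0 : ℝ)) t) :
    ∀ t ∈ Ici (0 : ℝ),
      (R t)ᴴ * R t = S t ^ 2 ∧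
      (R t * (S t)⁻¹)ᴴ * (R t * (S t)⁻¹) = 1 ∧
      HasDerivWithinAt R
        ((θ / 2) • ((R t * (S t)⁻¹) * Ψ t * (R t * (S t)⁻¹)ᴴ * R t)) (Ici (0 : ℝ)) t ∧
      ∀ ρ : Matrix (Fin d) (Fin d) ℂ, IsDensityMatrix ρ →
        (Matrix.trace (ρ * (R t)ᴴ * R t)).re = (Matrix.trace (ρ * S t ^ 2)).re := by
  -- basic facts about S
  have hdet : ∀ u ∈ Ici (0 : ℝ), IsUnit (S u).det := fun u hu =>
    ((hSpos u hu).2.det_pos.ne').isUnit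
  have hSmul : ∀ u ∈ Ici (0 : ℝ), (S u)⁻¹ * S u = 1 := fun u hu =>
    Matrix.nonsing_inv_mul _ (hdet u hu)
  have hmulS : ∀ u ∈ Ici (0 : ℝ), S u * (S u)⁻¹ = 1 := fun u hu =>
    Matrix.mul_nonsing_inv _ (hdet u hu)
  have hSinvH : ∀ u ∈ Ici (0 : ℝ), ((S u)⁻¹)ᴴ = (S u)⁻¹ := fun u hu =>
    ((hSpos u hu).1.inv).eq
  -- coefficient matrices
  set A : ℝ → Matrix (Fin d) (Fin d) ℂ := fun u => S u * Ψ u * (S u)⁻¹ with hA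
  set B : ℝ → Matrix (Fin d) (Fin d) ℂ := fun u => (S u)⁻¹ * Ψ u * S u with hB
  set F : ℝ → Matrix (Fin d) (Fin d) ℂ := fun u => (R u)ᴴ * R u - S u ^ 2 with hF
  -- continuity
  have hScont : ContinuousOn S (Ici (0 : ℝ)) := fun u hu =>
    (hSdiff u hu).continuousWithinAt
  have hRcont : ContinuousOn R (Ici (0 : ℝ)) := fun u hu =>
    (hR u hu).differentiableWithinAt.continuousWithinAt
  have hSinvcont : ContinuousOn (fun u => (S u)⁻¹) (Ici (0 : ℝ)) := by
    have hdetc : ContinuousOn (fun u => (S u).det) (Ici (0 : ℝ)) :=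
      (continuous_id.matrix_det).comp_continuousOn hScont
    have hadjc : ContinuousOn (fun u => (S u).adjugate) (Ici (0 : ℝ)) :=
      (continuous_id.matrix_adjugate).comp_continuousOn hScont
    have h1 : ContinuousOn (fun u => ((S u).det)⁻¹ • (S u).adjugate) (Ici (0 : ℝ)) :=
      (hdetc.inv₀ fun u hu => (hdet u hu).ne_zero).smul hadjc
    refine h1.congr fun u hu => ?_
    rw [Matrix.inv_def, Ring.inverse_eq_inv']
  have hAcont : ContinuousOn A (Ici (0 : ℝ)) := (hScont.mul hΨcont).mul hSinvcont
  have hBcont : ContinuousOn B (Ici (0 : ℝ)) := (hSinvcont.mul hΨcont).mul hScont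
  -- the derivative of F
  have hFderiv : ∀ u ∈ Ici (0 : ℝ),
      HasDerivWithinAt F ((θ / 2) • (A u * F u + F u * B u)) (Ici (0 : ℝ)) u := by
    intro u hu
    have hRu := hR u hu
    have hprod := RSAux.HasDerivWithinAt.matMul (RSAux.hasDerivWithinAt_conjTranspose hRu) hRu
    have hder := hprod.sub (hS2 u hu)
    have hΨH := (hΨherm u hu).eq
    have hSH := (hSpos u hu).1.eq
    set Z := R u * (S u)⁻¹ * Ψ u * S u with hZ
    set N := S u * Ψ u * S u with hN
    have hc1 : ((θ / 2 : ℝ) • Z)ᴴ = (θ / 2 : ℝ) • (S u * Ψ u * ((S u)⁻¹ * (R u)ᴴ)) := by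
      rw [Matrix.conjTranspose_smul, star_trivial]
      congr 1
      rw [hZ, Matrix.conjTranspose_mul, Matrix.conjTranspose_mul, Matrix.conjTranspose_mul,
        hSinvH u hu, hΨH, hSH]
      simp only [Matrix.mul_assoc]
    have e1 : A u * F u = A u * ((R u)ᴴ * R u) - N := by
      rw [hF, mul_sub]
      congr 1
      show S u * Ψ u * (S u)⁻¹ * S u ^ 2 = N
      rw [pow_two, ← Matrix.mul_assoc, Matrix.mul_assoc (S u * Ψ u) (S u)⁻¹ (S u),
        hSmul u hu, Matrix.mul_one]
    have e2 : F u * B u = (R u)ᴴ * R u * B u - N := by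
      rw [hF, sub_mul]
      congr 1
      show S u ^ 2 * ((S u)⁻¹ * Ψ u * S u) = N
      rw [pow_two]
      calc S u * S u * ((S u)⁻¹ * Ψ u * S u)
          = S u * (S u * ((S u)⁻¹ * (Ψ u * S u))) := by
            simp only [Matrix.mul_assoc]
        _ = S u * (Ψ u * S u) := by
            rw [← Matrix.mul_assoc (S u) (S u)⁻¹ (Ψ u * S u), hmulS u hu, Matrix.one_mul]
        _ = N := by rw [hN, Matrix.mul_assoc]
    have e3 : S u * Ψ u * ((S u)⁻¹ * (R u)ᴴ) * R u = A u * ((R u)ᴴ * R u) := by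
      simp only [hA, Matrix.mul_assoc]
    have e4 : (R u)ᴴ * Z = (R u)ᴴ * R u * B u := by
      simp only [hZ, hB, Matrix.mul_assoc]
    have e5 : ((θ / 2 : ℝ)) • N + ((θ / 2 : ℝ)) • N = θ • N := by
      rw [← add_smul, add_halves]
    have key : (θ / 2 : ℝ) • (A u * F u + F u * B u) =
        (R u)ᴴ * ((θ / 2 : ℝ) • Z) + ((θ / 2 : ℝ) • Z)ᴴ * R u - θ • N := by
      rw [e1, e2, hc1, Matrix.mul_smul, Matrix.smul_mul, e3, e4,
        smul_add, smul_sub, smul_sub, ← e5]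
      abel
    rw [key]
    exact hder
  -- F vanishes on [0, ∞) (Gronwall)
  have hFzero : ∀ t ∈ Ici (0 : ℝ), F t = 0 := by
    intro t ht
    obtain ⟨Ca, hCa⟩ := (isCompact_Icc (a := (0:ℝ)) (b := t)).exists_bound_of_continuousOn
      (hAcont.mono Icc_subset_Ici_self)
    obtain ⟨Cb, hCb⟩ := (isCompact_Icc (a := (0:ℝ)) (b := t)).exists_bound_of_continuousOn
      (hBcont.mono Icc_subset_Ici_self)
    set K : ℝ := |θ / 2| * (((d : ℝ) + 1) * (max Ca 0 + max Cb 0)) with hK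
    have hcont : ContinuousOn F (Icc 0 t) := fun u hu =>
      ((hFderiv u (Icc_subset_Ici_self hu)).continuousWithinAt).mono Icc_subset_Ici_self
    have hder' : ∀ x ∈ Ico (0:ℝ) t,
        HasDerivWithinAt F ((θ / 2) • (A x * F x + F x * B x)) (Ici x) x := fun x hx =>
      (hFderiv x hx.1).mono (Ici_subset_Ici.2 hx.1)
    have hbound : ∀ x ∈ Ico (0:ℝ) t,
        ‖(θ / 2) • (A x * F x + F x * B x)‖ ≤ K * ‖F x‖ + 0 := by
      intro x hx
      have hxIcc : x ∈ Icc (0:ℝ) t := ⟨hx.1, hx.2.le⟩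
      have hA1 : ‖A x * F x‖ ≤ ((d : ℝ) + 1) * max Ca 0 * ‖F x‖ := by
        refine (RSAux.norm_mul_le' _ _).trans ?_
        refine mul_le_mul_of_nonneg_right ?_ (norm_nonneg _)
        exact mul_le_mul_of_nonneg_left ((hCa x hxIcc).trans (le_max_left _ _)) (by positivity)
      have hB1 : ‖F x * B x‖ ≤ ((d : ℝ) + 1) * max Cb 0 * ‖F x‖ := by
        refine (RSAux.norm_mul_le' _ _).trans ?_
        calc ((d : ℝ) + 1) * ‖F x‖ * ‖B x‖ ≤ ((d : ℝ) + 1) * ‖F x‖ * max Cb 0 :=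
              mul_le_mul_of_nonneg_left ((hCb x hxIcc).trans (le_max_left _ _)) (by positivity)
          _ = ((d : ℝ) + 1) * max Cb 0 * ‖F x‖ := by ring
      rw [norm_smul, Real.norm_eq_abs, add_zero, hK]
      calc |θ / 2| * ‖A x * F x + F x * B x‖
          ≤ |θ / 2| * (‖A x * F x‖ + ‖F x * B x‖) :=
            mul_le_mul_of_nonneg_left (norm_add_le _ _) (abs_nonneg _)
        _ ≤ |θ / 2| * (((d : ℝ) + 1) * max Ca 0 * ‖F x‖ + ((d : ℝ) + 1) * max Cb 0 * ‖F x‖) :=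
            mul_le_mul_of_nonneg_left (add_le_add hA1 hB1) (abs_nonneg _)
        _ = |θ / 2| * (((d : ℝ) + 1) * (max Ca 0 + max Cb 0)) * ‖F x‖ := by ring
    have h0 : ‖F 0‖ ≤ 0 := by
      have : F 0 = 0 := by
        simp [hF, hR0, hS0]
      rw [this, norm_zero]
    have hg := norm_le_gronwallBound_of_norm_deriv_right_le hcont hder' h0 hbound t
      ⟨ht, le_refl t⟩
    rw [gronwallBound_ε0_δ0] at hg
    exact norm_le_zero_iff.mp hg
  -- conclusions
  intro t ht
  have hRR : (R t)ᴴ * R t = S t ^ 2 := sub_eq_zero.mp (hFzero t ht)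
  have hunit : (R t * (S t)⁻¹)ᴴ * (R t * (S t)⁻¹) = 1 := by
    rw [Matrix.conjTranspose_mul, hSinvH t ht]
    have h1 : (R t)ᴴ * (R t * (S t)⁻¹) = S t := by
      rw [← Matrix.mul_assoc, hRR, pow_two, Matrix.mul_assoc, hmulS t ht, Matrix.mul_one]
    calc (S t)⁻¹ * (R t)ᴴ * (R t * (S t)⁻¹)
        = (S t)⁻¹ * ((R t)ᴴ * (R t * (S t)⁻¹)) := by rw [Matrix.mul_assoc]
      _ = (S t)⁻¹ * S t := by rw [h1]
      _ = 1 := hSmul t ht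
  refine ⟨hRR, hunit, ?_, ?_⟩
  · have hVform : (R t * (S t)⁻¹) * Ψ t * (R t * (S t)⁻¹)ᴴ * R t =
        R t * (S t)⁻¹ * Ψ t * S t := by
      rw [Matrix.conjTranspose_mul, hSinvH t ht]
      have h2 : (S t)⁻¹ * (R t)ᴴ * R t = S t := by
        rw [Matrix.mul_assoc, hRR, pow_two, ← Matrix.mul_assoc, hSmul t ht, Matrix.one_mul]
      calc R t * (S t)⁻¹ * Ψ t * ((S t)⁻¹ * (R t)ᴴ) * R t
          = R t * (S t)⁻¹ * Ψ t * ((S t)⁻¹ * (R t)ᴴ * R t) := by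
            simp only [Matrix.mul_assoc]
        _ = R t * (S t)⁻¹ * Ψ t * S t := by rw [h2]
    rw [hVform]
    exact hR t ht
  · intro ρ _
    rw [Matrix.mul_assoc, hRR]
end

section
/- Let ε ≥ 0 and let n, μ, α be positive reals; set σ := 2ε/(n·μ). Then the infimum over θ ∈ (0, μ/(4α)) of the quantity (ε + (n/2)·(μ − √(μ² − 4·θ·α·μ)))/θ equals n·α·(1 + σ + √(σ·(2+σ))). Moreover, if ε > 0, the infimum is attained at θ* = (μ/(2α))·(1 + σ − √(σ·(2+σ)))·√(σ·(2+σ)), and θ* ∈ (0, μ/(4α)). -/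
set_option maxHeartbeats 2000000 in

/-- optimization in the proof of Theorem 5: the infimum over
`θ ∈ (0, μ/(4α))` of `(ε + (n/2)(μ − √(μ² − 4θαμ)))/θ` equals
`nα(1 + σ + √(σ(2+σ)))` with `σ = 2ε/(nμ)`, and for `ε > 0` it is attained at
`θ* = (μ/(2α))(1 + σ − √(σ(2+σ)))√(σ(2+σ)) ∈ (0, μ/(4α))`. -/
theorem risk_sensitivity_optimization
    (ε n μ α : ℝ) (hε : 0 ≤ ε) (hn : 0 < n) (hμ : 0 < μ) (hα : 0 < α)
    (σ : ℝ) (hσ : σ = 2 * ε / (n * μ)) :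
    sInf {y : ℝ | ∃ θ : ℝ, 0 < θ ∧ θ < μ / (4 * α) ∧
        y = (ε + n / 2 * (μ - Real.sqrt (μ ^ 2 - 4 * θ * α * μ))) / θ} =
      n * α * (1 + σ + Real.sqrt (σ * (2 + σ))) ∧
    (0 < ε →
      (μ / (2 * α)) * ((1 + σ - Real.sqrt (σ * (2 + σ))) * Real.sqrt (σ * (2 + σ))) ∈
          Set.Ioo 0 (μ / (4 * α)) ∧
        (ε + n / 2 * (μ - Real.sqrt (μ ^ 2 -
              4 * ((μ / (2 * α)) * ((1 + σ - Real.sqrt (σ * (2 + σ))) *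
                Real.sqrt (σ * (2 + σ)))) * α * μ))) /
            ((μ / (2 * α)) * ((1 + σ - Real.sqrt (σ * (2 + σ))) * Real.sqrt (σ * (2 + σ)))) =
          n * α * (1 + σ + Real.sqrt (σ * (2 + σ)))) := by
  have hnμ : 0 < n * μ := mul_pos hn hμ
  have hσ0 : 0 ≤ σ := by rw [hσ]; positivity
  have hεσ : 2 * ε = σ * n * μ := by rw [hσ]; field_simp
  set s : ℝ := Real.sqrt (σ * (2 + σ)) with hsdef
  have hs0 : 0 ≤ s := Real.sqrt_nonneg _
  have hs2 : s ^ 2 = σ * (2 + σ) := Real.sq_sqrt (by positivity)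
  have hslt : s < 1 + σ := by nlinarith [hs2, hs0, sq_nonneg (s - (1 + σ))]
  -- lower bound
  have hlb : ∀ θ : ℝ, 0 < θ → θ < μ / (4 * α) →
      n * α * (1 + σ + s) ≤ (ε + n / 2 * (μ - Real.sqrt (μ ^ 2 - 4 * θ * α * μ))) / θ := by
    intro θ hθ hθ'
    rw [lt_div_iff₀ (by positivity)] at hθ'
    have hD : 0 < μ ^ 2 - 4 * θ * α * μ := by nlinarith
    set r := Real.sqrt (μ ^ 2 - 4 * θ * α * μ) with hr
    have hr0 : 0 ≤ r := Real.sqrt_nonneg _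
    have hr2 : r ^ 2 = μ ^ 2 - 4 * θ * α * μ := Real.sq_sqrt hD.le
    have h4 : 4 * α * μ * θ = μ ^ 2 - r ^ 2 := by rw [hr2]; ring
    rw [le_div_iff₀ hθ]
    have hs2μ : μ ^ 2 * s ^ 2 = μ ^ 2 * (σ * (2 + σ)) := by rw [hs2]
    have key : 0 ≤ (1 + σ + s) * (μ - r) ^ 2 - 2 * (σ + s) * μ * (μ - r) + 2 * σ * μ ^ 2 := by
      nlinarith [sq_nonneg ((1 + σ + s) * (μ - r) - (σ + s) * μ), hs2μ, hσ0, hs0]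
    have main : 4 * μ * ((ε + n / 2 * (μ - r)) - n * α * (1 + σ + s) * θ) =
        n * ((1 + σ + s) * (μ - r) ^ 2 - 2 * (σ + s) * μ * (μ - r) + 2 * σ * μ ^ 2) := by
      linear_combination (2 * μ) * hεσ - n * (1 + σ + s) * h4
    nlinarith [mul_nonneg hn.le key, main, hμ]
  -- the candidate minimizer
  set θs : ℝ := (μ / (2 * α)) * ((1 + σ - s) * s) with hθsdef
  have h1σs : 0 < 1 + σ - s := by linarith
  -- facts used when ε > 0
  have hεpos : 0 < ε → (θs ∈ Set.Ioo 0 (μ / (4 * α)) ∧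
      (ε + n / 2 * (μ - Real.sqrt (μ ^ 2 - 4 * θs * α * μ))) / θs = n * α * (1 + σ + s)) := by
    intro hε'
    have hσp : 0 < σ := by rw [hσ]; positivity
    have hsp : 0 < s := Real.sqrt_pos.2 (by positivity)
    have hθsp : 0 < θs := by
      have : 0 < (1 + σ - s) * s := mul_pos h1σs hsp
      positivity
    have hθslt : θs < μ / (4 * α) := by
      rw [lt_div_iff₀ (by positivity : (0:ℝ) < 4 * α)]
      have hexp : θs * (4 * α) = 2 * μ * ((1 + σ - s) * s) := by
        rw [hθsdef]; field_simp; ring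
      rw [hexp]
      nlinarith [mul_pos hμ (mul_pos h1σs h1σs), mul_pos hμ hsp, hs2,
        mul_pos hμ hσp]
    have hθα : μ / (2 * α) * α = μ / 2 := by
      rw [div_mul_eq_mul_div, mul_div_mul_right _ _ hα.ne']
    have hin : μ ^ 2 - 4 * θs * α * μ = (μ * (1 + σ - s)) ^ 2 := by
      rw [hθsdef]; linear_combination (-4 * ((1 + σ - s) * s) * μ) * hθα + (μ ^ 2) * hs2
    have e1 : ε + n / 2 * (μ - μ * (1 + σ - s)) = n * α * (1 + σ + s) * θs := by
      rw [hθsdef]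
      linear_combination (-n * (1 + σ + s) * ((1 + σ - s) * s)) * hθα + (n * μ * s / 2) * hs2 + (1 / 2) * hεσ
    have hval : (ε + n / 2 * (μ - Real.sqrt (μ ^ 2 - 4 * θs * α * μ))) / θs
        = n * α * (1 + σ + s) := by
      rw [hin, Real.sqrt_sq (by positivity : 0 ≤ μ * (1 + σ - s)), e1,
        mul_div_cancel_right₀ _ hθsp.ne']
    exact ⟨⟨hθsp, hθslt⟩, hval⟩
  constructor
  · -- sInf computation
    apply csInf_eq_of_forall_ge_of_forall_gt_exists_lt
    · -- nonempty
      refine ⟨(ε + n / 2 * (μ - Real.sqrt (μ ^ 2 - 4 * (μ / (8 * α)) * α * μ))) / (μ / (8 * α)),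
        μ / (8 * α), by positivity, ?_, rfl⟩
      rw [div_lt_div_iff₀ (by positivity) (by positivity)]
      nlinarith [mul_pos hμ hα]
    · rintro y ⟨θ, hθ, hθ', rfl⟩
      exact hlb θ hθ hθ'
    · intro w hw
      rcases eq_or_lt_of_le hε with hε0 | hε'
      · -- ε = 0 case: infimum not attained, approach as θ → 0
        have hσz : σ = 0 := by
          rw [hσ, ← hε0]; simp
        have hsz : s = 0 := by
          rw [hsdef, hσz]; simp
        rw [hσz, hsz] at hw
        simp only [add_zero] at hw
        have hw' : n * α < w := by nlinarith [hw]
        have hwpos : 0 < w := lt_trans (by positivity) hw'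
        set θ : ℝ := min (μ / (8 * α)) ((w - n * α) * μ / (16 * n * α ^ 2)) with hθdef
        have hθpos : 0 < θ := by
          apply lt_min (by positivity)
          have : 0 < w - n * α := by linarith
          positivity
        have hθa : θ * (8 * α) ≤ μ := by
          have := min_le_left (μ / (8 * α)) ((w - n * α) * μ / (16 * n * α ^ 2))
          rw [← hθdef] at this
          calc θ * (8 * α) ≤ (μ / (8 * α)) * (8 * α) := by
                apply mul_le_mul_of_nonneg_right this (by positivity)
            _ = μ := by field_simp
        have hθb : θ * (16 * n * α ^ 2) ≤ (w - n * α) * μ := by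
          have := min_le_right (μ / (8 * α)) ((w - n * α) * μ / (16 * n * α ^ 2))
          rw [← hθdef] at this
          calc θ * (16 * n * α ^ 2) ≤ ((w - n * α) * μ / (16 * n * α ^ 2)) * (16 * n * α ^ 2) := by
                apply mul_le_mul_of_nonneg_right this (by positivity)
            _ = (w - n * α) * μ := by field_simp
        have hθlt : θ < μ / (4 * α) := by
          rw [lt_div_iff₀ (by positivity)]
          nlinarith [mul_pos hθpos hα]
        refine ⟨_, ⟨θ, hθpos, hθlt, rfl⟩, ?_⟩
        have hD : 0 < μ ^ 2 - 4 * θ * α * μ := by nlinarith [mul_pos hθpos hα]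
        set r := Real.sqrt (μ ^ 2 - 4 * θ * α * μ) with hr
        have hr0 : 0 ≤ r := Real.sqrt_nonneg _
        have hr2 : r ^ 2 = μ ^ 2 - 4 * θ * α * μ := Real.sq_sqrt hD.le
        have hrhalf : μ / 2 ≤ r := by nlinarith [hr2, hr0, mul_pos hθpos hα]
        have hrle : r ≤ μ := by nlinarith [hr2, hr0, mul_pos (mul_pos hθpos hα) hμ]
        have hmr : μ - r ≤ 3 * α * θ := by nlinarith [hr2, hrhalf, mul_pos hα hθpos]
        rw [div_lt_iff₀ hθpos, ← hε0]
        have h1 : n / 2 * (μ - r) * (μ + r) = 2 * n * α * θ * μ := by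
          linear_combination (-(n / 2)) * hr2
        have hμr : 0 < μ + r := by linarith
        have hd : 0 < w - n * α := by linarith
        have hB : 2 * n * α * θ * μ < w * θ * (μ + r) := by
          nlinarith [mul_le_mul_of_nonneg_left hmr (mul_pos hwpos hθpos).le,
            mul_le_mul_of_nonneg_right hθb hθpos.le,
            mul_le_mul_of_nonneg_right hθa (mul_pos hd hθpos).le,
            mul_pos (mul_pos hd hμ) hθpos]
        have hC : n / 2 * (μ - r) * (μ + r) < w * θ * (μ + r) := by rw [h1]; exact hB
        have := lt_of_mul_lt_mul_right hC hμr.le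
        linarith
      · obtain ⟨⟨h1, h2⟩, h3⟩ := hεpos hε'
        exact ⟨_, ⟨θs, h1, h2, rfl⟩, by rw [h3]; exact hw⟩
  · intro hε'
    obtain ⟨hmem, hval⟩ := hεpos hε'
    exact ⟨hmem, hval⟩
end

section
/- For every σ ≥ 0, the infimum over u ∈ (0,1) of (σ + 1 − √(1 − u))/u equals (1 + σ + √(σ·(2+σ)))/2. -/
/-!
Substituting `t = √(1 - u)` turns the objective into `(c - t) / (1 - t²)` on `t ∈ (0, 1)`.
Writing `c = (a + a⁻¹) / 2` with `a ≥ 1`, one has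
`(c - t) / (1 - t²) - a / 2 = (a t - 1)² / (2 a (1 - t²))`, so the infimum is `a / 2`,
approached as `t ↑ a⁻¹` (attained when `a > 1`). For `c = σ + 1` this gives
`a = 1 + σ + √(σ (2 + σ))`.
-/

open Set

theorem setOf_div_sqrt_one_sub_eq_image (c : ℝ) :
    {y : ℝ | ∃ u : ℝ, 0 < u ∧ u < 1 ∧ y = (c - Real.sqrt (1 - u)) / u} =
      (fun t => (c - t) / (1 - t ^ 2)) '' Ioo 0 1 := by
  ext y
  constructor
  · rintro ⟨u, hu0, hu1, rfl⟩
    have hsq : Real.sqrt (1 - u) ^ 2 = 1 - u := Real.sq_sqrt (by linarith)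
    refine ⟨Real.sqrt (1 - u), ⟨Real.sqrt_pos.2 (by linarith), ?_⟩, ?_⟩
    · rw [Real.sqrt_lt' one_pos]
      linarith
    · simp only [hsq, sub_sub_cancel]
  · rintro ⟨t, ⟨ht0, ht1⟩, rfl⟩
    refine ⟨1 - t ^ 2, by nlinarith, by nlinarith, ?_⟩
    rw [sub_sub_cancel, Real.sqrt_sq ht0.le]

section

variable {a t : ℝ}

theorem half_le_div_one_sub_sq (ha : 0 < a) (ht : t ^ 2 < 1) :
    a / 2 ≤ ((a + a⁻¹) / 2 - t) / (1 - t ^ 2) := by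
  rw [le_div_iff₀ (by linarith)]
  have key : (a + a⁻¹) / 2 - t - a / 2 * (1 - t ^ 2) = (a * t - 1) ^ 2 / (2 * a) := by
    field_simp
    ring
  have : 0 ≤ (a * t - 1) ^ 2 / (2 * a) := by positivity
  linarith

theorem div_one_sub_sq_le (ha : 1 ≤ a) (ht0 : 0 ≤ t) (ht : t < a⁻¹) :
    ((a + a⁻¹) / 2 - t) / (1 - t ^ 2) ≤ a / 2 + (1 - a * t) / 2 := by
  have ha0 : 0 < a := by linarith
  have hat : a * t < 1 := by
    simpa [mul_inv_cancel₀ ha0.ne'] using mul_lt_mul_of_pos_left ht ha0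
  have ht1 : t < 1 := ht.trans_le (inv_le_one_of_one_le₀ ha)
  have hden : 0 < 1 - t ^ 2 := by nlinarith
  rw [div_le_iff₀ hden]
  have key : (a + a⁻¹) / 2 - t - a / 2 * (1 - t ^ 2) = (1 - a * t) ^ 2 / (2 * a) := by
    field_simp
    ring
  -- `(1 - a t)² ≤ a (1 - a t) (1 - t²)` because `1 - a t ≤ a (1 - t) ≤ a (1 - t²)`
  have hsq : (1 - a * t) ^ 2 / (2 * a) ≤ (1 - a * t) / 2 * (1 - t ^ 2) := by
    rw [div_le_iff₀ (by linarith)]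
    have : 1 - a * t ≤ a * (1 - t ^ 2) := by nlinarith
    nlinarith
  nlinarith

theorem sInf_image_div_one_sub_sq (ha : 1 ≤ a) :
    sInf ((fun t => ((a + a⁻¹) / 2 - t) / (1 - t ^ 2)) '' Ioo 0 1) = a / 2 := by
  have ha0 : 0 < a := by linarith
  have hainv : a⁻¹ ≤ 1 := inv_le_one_of_one_le₀ ha
  refine csInf_eq_of_forall_ge_of_forall_gt_exists_lt (by simp) ?_ ?_
  · rintro _ ⟨t, ⟨ht0, ht1⟩, rfl⟩
    exact half_le_div_one_sub_sq ha0 (by nlinarith)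
  · intro w hw
    set δ := min (a⁻¹ / 2) ((w - a / 2) / a)
    have hδ : 0 < δ := lt_min (by positivity) (div_pos (by linarith) ha0)
    have hδa : a * δ ≤ w - a / 2 := by
      rw [← le_div_iff₀' ha0]
      exact min_le_right _ _
    have ht0 : 0 < a⁻¹ - δ := by linarith [min_le_left (a⁻¹ / 2) ((w - a / 2) / a)]
    refine ⟨_, ⟨a⁻¹ - δ, ⟨ht0, by linarith⟩, rfl⟩, ?_⟩
    calc ((a + a⁻¹) / 2 - (a⁻¹ - δ)) / (1 - (a⁻¹ - δ) ^ 2)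
        ≤ a / 2 + (1 - a * (a⁻¹ - δ)) / 2 := div_one_sub_sq_le ha ht0.le (by linarith)
      _ = a / 2 + a * δ / 2 := by rw [mul_sub, mul_inv_cancel₀ ha0.ne']; ring
      _ < w := by nlinarith

end

/-- for every `σ ≥ 0`,
`inf_{u ∈ (0,1)} (σ + 1 − √(1 − u))/u = (1 + σ + √(σ(2+σ)))/2`. -/
theorem normalized_risk_sensitivity_optimization (σ : ℝ) (hσ : 0 ≤ σ) :
    sInf {y : ℝ | ∃ u : ℝ, 0 < u ∧ u < 1 ∧ y = (σ + 1 - Real.sqrt (1 - u)) / u} =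
      (1 + σ + Real.sqrt (σ * (2 + σ))) / 2 := by
  set s := Real.sqrt (σ * (2 + σ))
  have hs0 : 0 ≤ s := Real.sqrt_nonneg _
  have hs2 : s ^ 2 = σ * (2 + σ) := Real.sq_sqrt (by positivity)
  have hinv : (1 + σ + s)⁻¹ = 1 + σ - s := inv_eq_of_mul_eq_one_right (by nlinarith)
  have hc : σ + 1 = ((1 + σ + s) + (1 + σ + s)⁻¹) / 2 := by rw [hinv]; ring
  rw [hc, setOf_div_sqrt_one_sub_eq_image, sInf_image_div_one_sub_sq (by linarith)]
end

section
/- Let μ > 0, α > 0 and 0 ≤ θ < μ/(4α). Then the function λ ↦ ln(1 − 4θαμ/(λ² + μ²)) is integrable over ℝ and −(1/(4π)) · ∫_{-∞}^{∞} ln(1 − 4θαμ/(λ² + μ²)) dλ = (1/2)·(μ − √(μ² − 4θαμ)). -/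
open MeasureTheory Real

/-- `x ↦ (x² + m²)⁻¹` is integrable for `m > 0`. -/
lemma integrable_inv_sq_add {m : ℝ} (hm : 0 < m) :
    Integrable (fun x : ℝ => (x ^ 2 + m ^ 2)⁻¹) := by
  have h1 : Integrable (fun x : ℝ => (1 + (m⁻¹ * x) ^ 2)⁻¹) :=
    (integrable_comp_mul_left_iff (fun y : ℝ => (1 + y ^ 2)⁻¹)
      (inv_ne_zero hm.ne')).2 integrable_inv_one_add_sq
  have h2 := h1.const_mul (m ^ 2)⁻¹
  have : (fun x : ℝ => (m ^ 2)⁻¹ * (1 + (m⁻¹ * x) ^ 2)⁻¹) =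
      fun x : ℝ => (x ^ 2 + m ^ 2)⁻¹ := by
    funext x
    rw [mul_pow, ← mul_inv]
    congr 1
    field_simp
    ring
  rwa [this] at h2

/-- `∫ (x² + m²)⁻¹ = π / m` for `m > 0`. -/
lemma integral_inv_sq_add {m : ℝ} (hm : 0 < m) :
    ∫ x : ℝ, (x ^ 2 + m ^ 2)⁻¹ = π / m := by
  have key : (fun x : ℝ => (x ^ 2 + m ^ 2)⁻¹) =
      fun x : ℝ => (m ^ 2)⁻¹ * (1 + (m⁻¹ * x) ^ 2)⁻¹ := by
    funext x
    rw [mul_pow, ← mul_inv]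
    congr 1
    field_simp
    ring
  rw [key, MeasureTheory.integral_const_mul]
  rw [MeasureTheory.Measure.integral_comp_mul_left (fun y : ℝ => (1 + y ^ 2)⁻¹) m⁻¹,
    integral_univ_inv_one_add_sq]
  rw [inv_inv, abs_of_pos hm, smul_eq_mul]
  field_simp

lemma abs_log_sub_log_le {u v : ℝ} (hu : 0 < u) (hv : 0 < v) :
    |Real.log u - Real.log v| ≤ |u - v| / min u v := by
  have key : ∀ {s t : ℝ}, 0 < s → 0 < t → t ≤ s →
      Real.log s - Real.log t ≤ (s - t) / t := by
    intro s t hs ht hts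
    have := Real.log_le_sub_one_of_pos (div_pos hs ht)
    rw [Real.log_div hs.ne' ht.ne'] at this
    calc Real.log s - Real.log t ≤ s / t - 1 := this
      _ = (s - t) / t := by field_simp
  rcases le_total v u with h | h
  · rw [abs_of_nonneg (sub_nonneg.2 (Real.log_le_log hv h)),
      abs_of_nonneg (sub_nonneg.2 h), min_eq_right h]
    exact key hu hv h
  · rw [abs_of_nonpos (sub_nonpos.2 (Real.log_le_log hu h)),
      abs_of_nonpos (sub_nonpos.2 h), min_eq_left h, neg_sub, neg_sub]
    exact key hv hu h

lemma sq_add_pos (x m : ℝ) (hm : 0 < m) : 0 < x ^ 2 + m ^ 2 :=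
  add_pos_of_nonneg_of_pos (sq_nonneg x) (pow_pos hm 2)

/-- Integrability of the log difference. -/
lemma integrable_logdiff {a b : ℝ} (ha : 0 < a) (hb : 0 < b) :
    Integrable (fun x : ℝ => Real.log (x ^ 2 + a ^ 2) - Real.log (x ^ 2 + b ^ 2)) := by
  set m := min a b with hm
  have hm0 : 0 < m := lt_min ha hb
  have hbound : Integrable (fun x : ℝ => |a ^ 2 - b ^ 2| * (x ^ 2 + m ^ 2)⁻¹) :=
    (integrable_inv_sq_add hm0).const_mul _
  refine hbound.mono' ?_ ?_
  · apply Continuous.aestronglyMeasurable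
    exact ((by continuity : Continuous fun x : ℝ => x ^ 2 + a ^ 2).log
      (fun x => (sq_add_pos x a ha).ne')).sub
      ((by continuity : Continuous fun x : ℝ => x ^ 2 + b ^ 2).log
      (fun x => (sq_add_pos x b hb).ne'))
  · refine Filter.Eventually.of_forall fun x => ?_
    have hua : 0 < x ^ 2 + a ^ 2 := sq_add_pos x a ha
    have hub : 0 < x ^ 2 + b ^ 2 := sq_add_pos x b hb
    have h1 := abs_log_sub_log_le hua hub
    have hmin : min (x ^ 2 + a ^ 2) (x ^ 2 + b ^ 2) = x ^ 2 + m ^ 2 := by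
      rcases le_total a b with h | h
      · rw [min_eq_left (by nlinarith), hm, min_eq_left h]
      · rw [min_eq_right (by nlinarith), hm, min_eq_right h]
    have hsub : (x ^ 2 + a ^ 2) - (x ^ 2 + b ^ 2) = a ^ 2 - b ^ 2 := by ring
    rw [hmin, hsub] at h1
    calc ‖Real.log (x ^ 2 + a ^ 2) - Real.log (x ^ 2 + b ^ 2)‖
        ≤ |a ^ 2 - b ^ 2| / (x ^ 2 + m ^ 2) := h1
      _ = |a ^ 2 - b ^ 2| * (x ^ 2 + m ^ 2)⁻¹ := div_eq_mul_inv _ _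
      _ ≤ |a ^ 2 - b ^ 2| * (x ^ 2 + m ^ 2)⁻¹ := le_refl _

/-- Derivative of the parametric integral. -/
lemma hasDerivAt_logdiff_integral {b : ℝ} (hb : 0 < b) {a₀ : ℝ} (ha₀ : 0 < a₀) :
    HasDerivAt (fun a : ℝ => ∫ x : ℝ, (Real.log (x ^ 2 + a ^ 2) - Real.log (x ^ 2 + b ^ 2)))
      (2 * π) a₀ := by
  have hε : (0 : ℝ) < a₀ / 2 := by linarith
  have hball : ∀ a ∈ Metric.ball a₀ (a₀ / 2), a₀ / 2 < a ∧ a < 3 * a₀ / 2 := by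
    intro a haa
    rw [Metric.mem_ball, Real.dist_eq, abs_lt] at haa
    constructor <;> linarith [haa.1, haa.2]
  have key := hasDerivAt_integral_of_dominated_loc_of_deriv_le (μ := volume)
      (F := fun a x => Real.log (x ^ 2 + a ^ 2) - Real.log (x ^ 2 + b ^ 2))
      (F' := fun a x => 2 * a * (x ^ 2 + a ^ 2)⁻¹) (x₀ := a₀)
      (bound := fun x => 3 * a₀ * (x ^ 2 + (a₀ / 2) ^ 2)⁻¹) (Metric.ball_mem_nhds a₀ hε)
      ?_ ?_ ?_ ?_ ?_ ?_
  · have h2 := key.2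
    have : ∫ x : ℝ, 2 * a₀ * (x ^ 2 + a₀ ^ 2)⁻¹ = 2 * π := by
      rw [MeasureTheory.integral_const_mul, integral_inv_sq_add ha₀]
      field_simp
    rwa [this] at h2
  · refine (eventually_gt_nhds ha₀).mono fun a ha => ?_
    apply Continuous.aestronglyMeasurable
    exact ((by continuity : Continuous fun x : ℝ => x ^ 2 + a ^ 2).log
      (fun x => (sq_add_pos x a ha).ne')).sub
      ((by continuity : Continuous fun x : ℝ => x ^ 2 + b ^ 2).log
      (fun x => (sq_add_pos x b hb).ne'))
  · exact integrable_logdiff ha₀ hb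
  · apply Continuous.aestronglyMeasurable
    apply Continuous.mul continuous_const
    apply Continuous.inv₀ (by continuity)
    intro x
    exact (sq_add_pos x a₀ ha₀).ne'
  · refine Filter.Eventually.of_forall fun x => fun a haa => ?_
    obtain ⟨h1, h2⟩ := hball a haa
    have ha : 0 < a := lt_trans (by linarith) h1
    have hd1 : 0 < x ^ 2 + a ^ 2 := sq_add_pos x a ha
    have hd2 : 0 < x ^ 2 + (a₀ / 2) ^ 2 := sq_add_pos x (a₀ / 2) hε
    have hle : x ^ 2 + (a₀ / 2) ^ 2 ≤ x ^ 2 + a ^ 2 := by nlinarith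
    rw [Real.norm_eq_abs, abs_of_nonneg (by positivity)]
    calc 2 * a * (x ^ 2 + a ^ 2)⁻¹ ≤ 3 * a₀ * (x ^ 2 + a ^ 2)⁻¹ := by
          apply mul_le_mul_of_nonneg_right (by linarith) (by positivity)
      _ ≤ 3 * a₀ * (x ^ 2 + (a₀ / 2) ^ 2)⁻¹ := by
          apply mul_le_mul_of_nonneg_left _ (by positivity)
          exact inv_anti₀ hd2 hle
  · exact (integrable_inv_sq_add hε).const_mul _
  · refine Filter.Eventually.of_forall fun x => fun a haa => ?_
    obtain ⟨h1, _⟩ := hball a haa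
    have ha : 0 < a := lt_trans (by linarith) h1
    have hd1 : (0:ℝ) < x ^ 2 + a ^ 2 := sq_add_pos x a ha
    have hinner : HasDerivAt (fun a : ℝ => x ^ 2 + a ^ 2) (2 * a) a := by
      have := ((hasDerivAt_pow 2 a).const_add (x ^ 2))
      simpa using this
    have hlog := hinner.log hd1.ne'
    have h := hlog.sub_const (Real.log (x ^ 2 + b ^ 2))
    simpa [div_eq_mul_inv] using h

/-- The value of the log-difference integral: `2π(a − b)` for `0 < a ≤ b`. -/
lemma integral_logdiff {a b : ℝ} (ha : 0 < a) (hab : a ≤ b) :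
    ∫ x : ℝ, (Real.log (x ^ 2 + a ^ 2) - Real.log (x ^ 2 + b ^ 2)) = 2 * π * (a - b) := by
  have hb : 0 < b := lt_of_lt_of_le ha hab
  rcases eq_or_lt_of_le hab with rfl | hlt
  · simp
  · set F := fun t : ℝ => ∫ x : ℝ, (Real.log (x ^ 2 + t ^ 2) - Real.log (x ^ 2 + b ^ 2))
    have hderiv : ∀ t ∈ Set.Icc a b, HasDerivAt F (2 * π) t := fun t ht =>
      hasDerivAt_logdiff_integral hb (lt_of_lt_of_le ha ht.1)
    have hcont : ContinuousOn F (Set.Icc a b) := fun t ht =>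
      ((hderiv t ht).continuousAt).continuousWithinAt
    obtain ⟨c, _, hc⟩ := exists_hasDerivAt_eq_slope F (fun _ => 2 * π) hlt hcont
      (fun t ht => hderiv t ⟨le_of_lt ht.1, le_of_lt ht.2⟩)
    have hFb : F b = 0 := by simp [F]
    rw [hFb] at hc
    have hba : b - a ≠ 0 := by linarith
    field_simp at hc
    linarith [hc]

/-- frequency-domain integral (44): for `0 ≤ θ < μ/(4α)`,
`λ ↦ ln(1 − 4θαμ/(λ² + μ²))` is integrable on `ℝ` and
`−(1/(4π)) ∫ ln(1 − 4θαμ/(λ² + μ²)) dλ = (1/2)(μ − √(μ² − 4θαμ))`. -/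
theorem frequency_domain_integral
    (μ α θ : ℝ) (hμ : 0 < μ) (hα : 0 < α) (hθ0 : 0 ≤ θ) (hθ : θ < μ / (4 * α)) :
    Integrable (fun lam : ℝ => Real.log (1 - 4 * θ * α * μ / (lam ^ 2 + μ ^ 2))) ∧
      -(1 / (4 * π)) * ∫ lam : ℝ, Real.log (1 - 4 * θ * α * μ / (lam ^ 2 + μ ^ 2)) =
        1 / 2 * (μ - Real.sqrt (μ ^ 2 - 4 * θ * α * μ)) := by
  set c := 4 * θ * α * μ with hc
  have hc0 : 0 ≤ c := by positivity
  have hclt : c < μ ^ 2 := by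
    have h4 : θ * (4 * α) < μ := (lt_div_iff₀ (by positivity)).mp hθ
    have : c = (θ * (4 * α)) * μ := by ring
    rw [this]
    nlinarith
  set a := Real.sqrt (μ ^ 2 - c) with haeq
  have ha2 : a ^ 2 = μ ^ 2 - c := Real.sq_sqrt (by linarith)
  have ha : 0 < a := Real.sqrt_pos.2 (by linarith)
  have haμ : a ≤ μ := by
    rw [haeq]
    calc Real.sqrt (μ ^ 2 - c) ≤ Real.sqrt (μ ^ 2) :=
          Real.sqrt_le_sqrt (by linarith)
      _ = μ := Real.sqrt_sq hμ.le
  have hpt : ∀ x : ℝ, Real.log (1 - c / (x ^ 2 + μ ^ 2)) =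
      Real.log (x ^ 2 + a ^ 2) - Real.log (x ^ 2 + μ ^ 2) := by
    intro x
    have hden : 0 < x ^ 2 + μ ^ 2 := sq_add_pos x μ hμ
    have hnum : 0 < x ^ 2 + a ^ 2 := sq_add_pos x a ha
    have heq : 1 - c / (x ^ 2 + μ ^ 2) = (x ^ 2 + a ^ 2) / (x ^ 2 + μ ^ 2) := by
      have hcan : c / (x ^ 2 + μ ^ 2) * (x ^ 2 + μ ^ 2) = c :=
        div_mul_cancel₀ _ hden.ne'
      rw [ha2, eq_div_iff hden.ne', sub_mul, one_mul, hcan]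
      ring
    rw [heq, Real.log_div hnum.ne' hden.ne']
  have hfun : (fun lam : ℝ => Real.log (1 - 4 * θ * α * μ / (lam ^ 2 + μ ^ 2))) =
      fun x : ℝ => Real.log (x ^ 2 + a ^ 2) - Real.log (x ^ 2 + μ ^ 2) := by
    funext x
    rw [← hc]
    exact hpt x
  constructor
  · rw [hfun]
    exact integrable_logdiff ha hμ
  · rw [hfun, integral_logdiff ha haμ]
    have hπ : π ≠ 0 := Real.pi_ne_zero
    field_simp
    ring
end

section
/- Let A be a real n×n matrix, μ > 0, and Γ a real symmetric positive definite n×n matrix such that the matrix −(A·Γ + Γ·Aᵀ + 2μ·Γ) is positive semidefinite. Then for every τ ≥ 0, the ℓ²-operator norm satisfies ‖Γ^{-1/2} · exp(τ·A) · Γ^{1/2}‖ ≤ e^{−μτ}, where Γ^{1/2} is the positive definite square root of Γ and Γ^{-1/2} its inverse. -/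
/-! With `S = Γ^{1/2}` and `B = S⁻¹ A S`, conjugating the Lyapunov inequality by `S⁻¹` gives
`(B + μ) + (B + μ)ᵀ ≼ 0`. Hence `t ↦ ‖e^{t(B + μ)} x‖²` has derivative `2 ⟪(B + μ) y, y⟫ ≤ 0`
and `e^{τ(B + μ)}` is a contraction, while
`Γ^{-1/2} e^{τA} Γ^{1/2} = e^{τB} = e^{-μτ} e^{τ(B + μ)}`. -/

open Matrix
open scoped Matrix.Norms.L2Operator

section OldSqrt

open scoped ComplexOrder

/-- The positive semidefinite square root of a positive semidefinite matrix
(the definition `Matrix.PosSemidef.sqrt` of the older Mathlib, since removed). -/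
noncomputable def Matrix.PosSemidef.sqrt {n 𝕜 : Type*} [Fintype n] [RCLike 𝕜] [DecidableEq n]
    {A : Matrix n n 𝕜} (hA : A.PosSemidef) : Matrix n n 𝕜 :=
  hA.1.eigenvectorUnitary.1 * diagonal ((↑) ∘ Real.sqrt ∘ hA.1.eigenvalues) *
    (star hA.1.eigenvectorUnitary : Matrix n n 𝕜)

end OldSqrt

namespace Matrix.PosSemidef

open scoped ComplexOrder

variable {n 𝕜 : Type*} [Fintype n] [RCLike 𝕜] [DecidableEq n] {A : Matrix n n 𝕜}

theorem sqrt_eq_cfc (hA : A.PosSemidef) : hA.sqrt = cfc Real.sqrt A := by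
  rw [hA.1.cfc_eq]
  rfl

theorem sqrt_mul_sqrt (hA : A.PosSemidef) : hA.sqrt * hA.sqrt = A := by
  rw [hA.sqrt_eq_cfc, ← cfc_mul _ _ A]
  conv_rhs => rw [← cfc_id' ℝ A hA.1]
  refine cfc_congr fun x hx => Real.mul_self_sqrt ?_
  obtain ⟨i, rfl⟩ := hA.1.spectrum_real_eq_range_eigenvalues ▸ hx
  exact hA.eigenvalues_nonneg i

theorem isHermitian_sqrt (hA : A.PosSemidef) : hA.sqrt.IsHermitian := by
  rw [hA.sqrt_eq_cfc]
  exact cfc_predicate _ _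

end Matrix.PosSemidef

open scoped ComplexOrder in
theorem Matrix.PosDef.isUnit_sqrt {n 𝕜 : Type*} [Fintype n] [RCLike 𝕜] [DecidableEq n]
    {A : Matrix n n 𝕜} (hA : A.PosDef) : IsUnit hA.posSemidef.sqrt :=
  isUnit_of_mul_isUnit_left (hA.posSemidef.sqrt_mul_sqrt ▸ hA.isUnit)

open scoped RealInnerProductSpace in
theorem ContinuousLinearMap.norm_exp_smul_le_one {E : Type*} [NormedAddCommGroup E]
    [InnerProductSpace ℝ E] [CompleteSpace E] {T : E →L[ℝ] E} (hT : ∀ x, ⟪T x, x⟫ ≤ 0)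
    {τ : ℝ} (hτ : 0 ≤ τ) : ‖NormedSpace.exp (τ • T)‖ ≤ 1 := by
  refine opNorm_le_bound _ zero_le_one fun x => ?_
  set u : ℝ → E := fun t => NormedSpace.exp (t • T) x
  have hu : ∀ t, HasDerivAt u (T (u t)) t := fun t => by
    simpa using (hasDerivAt_exp_smul_const' T t).clm_apply (hasDerivAt_const t x)
  have hdecr : Antitone fun t => ‖u t‖ ^ 2 :=
    antitone_of_hasDerivAt_nonpos (fun t => (hu t).norm_sq) fun t => by
      simpa [real_inner_comm] using mul_nonpos_of_nonneg_of_nonpos zero_le_two (hT (u t))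
  have hτx : ‖u τ‖ ^ 2 ≤ ‖x‖ ^ 2 := by
    simpa [u] using hdecr hτ
  simpa using (pow_le_pow_iff_left₀ (norm_nonneg _) (norm_nonneg _) two_ne_zero).mp hτx

namespace Matrix

variable {ι : Type*} [Fintype ι]

theorem dotProduct_mulVec_nonpos_of_posSemidef_neg_add_transpose {C : Matrix ι ι ℝ}
    (hC : (-(C + Cᵀ)).PosSemidef) (x : ι → ℝ) : x ⬝ᵥ C *ᵥ x ≤ 0 := by
  have hCt : x ⬝ᵥ Cᵀ *ᵥ x = x ⬝ᵥ C *ᵥ x := by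
    rw [dotProduct_mulVec, vecMul_transpose, dotProduct_comm]
  have := hC.dotProduct_mulVec_nonneg x
  rw [star_trivial, neg_mulVec, dotProduct_neg, add_mulVec, dotProduct_add, hCt] at this
  linarith

variable [DecidableEq ι]

theorem toEuclideanCLM_exp (C : Matrix ι ι ℝ) :
    toEuclideanCLM (𝕜 := ℝ) (NormedSpace.exp C) =
      NormedSpace.exp (toEuclideanCLM (𝕜 := ℝ) C) :=
  -- `NormedSpace.map_exp` would need `NormedAlgebra ℚ`, which the L² operator norm lacks.
  NormedSpace.map_exp_of_mem_ball (𝕂 := ℝ) (toEuclideanCLM (𝕜 := ℝ) (n := ι))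
    (toEuclideanCLM (𝕜 := ℝ) (n := ι)).toAlgEquiv.toLinearMap.continuous_of_finiteDimensional
    C
    ((NormedSpace.expSeries_radius_eq_top ℝ (Matrix ι ι ℝ)).symm ▸ edist_lt_top _ _)

theorem norm_exp_smul_le_one {C : Matrix ι ι ℝ} (hC : (-(C + Cᵀ)).PosSemidef) {τ : ℝ}
    (hτ : 0 ≤ τ) : ‖NormedSpace.exp (τ • C)‖ ≤ 1 := by
  rw [← l2_opNorm_toEuclideanCLM, toEuclideanCLM_exp, map_smul]
  refine ContinuousLinearMap.norm_exp_smul_le_one (fun x => ?_) hτ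
  rw [real_inner_comm, inner_toEuclideanCLM]
  exact dotProduct_mulVec_nonpos_of_posSemidef_neg_add_transpose hC _

theorem exp_smul_eq_smul_exp_smul_add_smul_one (B : Matrix ι ι ℝ) (c t : ℝ) :
    NormedSpace.exp (t • B) = Real.exp (-c * t) • NormedSpace.exp (t • (B + c • 1)) := by
  have hcomm : Commute (t • B) ((t * c) • 1) := (Commute.one_right _).smul_right _
  rw [smul_add, smul_smul, exp_add_of_commute _ _ hcomm, ← Algebra.algebraMap_eq_smul_one,
    ← NormedSpace.algebraMap_exp_comm, ← Real.exp_eq_exp_ℝ, ← Algebra.commutes,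
    ← Algebra.smul_def, smul_smul, ← Real.exp_add]
  simp [mul_comm]

theorem PosSemidef.neg_add_transpose_inv_mul_mul {A S : Matrix ι ι ℝ} (hS : IsUnit S)
    (h : (-(A * (S * Sᵀ) + S * Sᵀ * Aᵀ)).PosSemidef) :
    (-(S⁻¹ * A * S + (S⁻¹ * A * S)ᵀ)).PosSemidef := by
  have hinv : S⁻¹ * S = 1 := nonsing_inv_mul S ((isUnit_iff_isUnit_det S).mp hS)
  have hinvT : Sᵀ * S⁻¹ᵀ = 1 := by rw [← transpose_mul, hinv, transpose_one]
  have hconj :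
      S⁻¹ * (A * (S * Sᵀ) + S * Sᵀ * Aᵀ) * S⁻¹ᵀ = S⁻¹ * A * S + (S⁻¹ * A * S)ᵀ := by
    simp only [Matrix.mul_add, Matrix.add_mul, transpose_mul, Matrix.mul_assoc, hinvT,
      ← Matrix.mul_assoc S⁻¹ S, hinv, Matrix.one_mul, Matrix.mul_one]
  have := h.conjTranspose_mul_mul_same S⁻¹ᵀ
  rwa [conjTranspose_eq_transpose_of_trivial, transpose_transpose, Matrix.mul_neg,
    Matrix.neg_mul, hconj] at this

end Matrix

theorem lyapunov_exponential_decay_general {n : ℕ}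
    (A Γ : Matrix (Fin n) (Fin n) ℝ) (μ : ℝ)
    (hΓ : Γ.PosDef)
    (hLyap : (-(A * Γ + Γ * Aᵀ + (2 * μ) • Γ)).PosSemidef) :
    ∀ τ : ℝ, 0 ≤ τ →
      ‖(hΓ.posSemidef.sqrt)⁻¹ * NormedSpace.exp (τ • A) * hΓ.posSemidef.sqrt‖ ≤
        Real.exp (-μ * τ) := by
  intro τ hτ
  set S := hΓ.posSemidef.sqrt
  have hS : IsUnit S := hΓ.isUnit_sqrt
  have hΓS : Γ = S * Sᵀ := by
    rw [(isHermitian_iff_isSymm.mp hΓ.posSemidef.isHermitian_sqrt).eq,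
      hΓ.posSemidef.sqrt_mul_sqrt]
  have hshift : S⁻¹ * (A + μ • 1) * S = S⁻¹ * A * S + μ • 1 := by
    rw [Matrix.mul_add, Matrix.add_mul, Matrix.mul_smul, Matrix.mul_one, Matrix.smul_mul,
      nonsing_inv_mul S ((isUnit_iff_isUnit_det S).mp hS)]
  have hdiss : (-(S⁻¹ * (A + μ • 1) * S + (S⁻¹ * (A + μ • 1) * S)ᵀ)).PosSemidef := by
    refine PosSemidef.neg_add_transpose_inv_mul_mul hS ?_
    convert hLyap using 2
    rw [← hΓS, transpose_add, transpose_smul, transpose_one]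
    simp only [Matrix.add_mul, Matrix.mul_add, Matrix.smul_mul, Matrix.mul_smul, Matrix.one_mul,
      Matrix.mul_one]
    module
  rw [← exp_conj' S _ hS, Matrix.mul_smul, Matrix.smul_mul,
    exp_smul_eq_smul_exp_smul_add_smul_one _ μ τ, ← hshift, norm_smul,
    Real.norm_of_nonneg (Real.exp_pos _).le]
  exact mul_le_of_le_one_right (Real.exp_pos _).le (norm_exp_smul_le_one hdiss hτ)

/-- under the Lyapunov inequality `AΓ + ΓAᵀ ≼ −2μΓ` with `Γ ≻ 0`,
one has `‖Γ^{-1/2} e^{τA} Γ^{1/2}‖ ≤ e^{−μτ}` for all `τ ≥ 0` (ℓ² operator norm). -/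
theorem lyapunov_exponential_decay {n : ℕ}
    (A Γ : Matrix (Fin n) (Fin n) ℝ) (μ : ℝ) (hμ : 0 < μ)
    (hΓsymm : Γᵀ = Γ) (hΓ : Γ.PosDef)
    (hLyap : (-(A * Γ + Γ * Aᵀ + (2 * μ) • Γ)).PosSemidef) :
    ∀ τ : ℝ, 0 ≤ τ →
      ‖(hΓ.posSemidef.sqrt)⁻¹ * NormedSpace.exp (τ • A) * hΓ.posSemidef.sqrt‖ ≤
        Real.exp (-μ * τ) :=
  lyapunov_exponential_decay_general A Γ μ hΓ hLyap
end

section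
/- Fix t > 0, let ρ be a d×d density matrix, and let C : [0,t] → Matrix d d ℂ be continuous with C(s) Hermitian for every s. For each θ ≥ 0 let R_θ : [0,t] → Matrix d d ℂ be the solution of R_θ(0) = 1 and R_θ'(s) = (θ/2)·C(s)·R_θ(s) (the left time-ordered exponential). Then lim_{θ → 0⁺} (1/θ) · ln( Re Tr(ρ · R_θ(t)ᴴ · R_θ(t)) ) = ∫₀ᵗ Re Tr(ρ · C(s)) ds. (The small risk-sensitivity-parameter asymptotics (9) of the original quantum risk-sensitive cost functional.) -/
open Matrix Filter Set
open scoped ComplexOrder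

attribute [local instance] Matrix.normedAddCommGroup Matrix.normedSpace

section Aux

variable {d : ℕ}

lemma matNormOne : ‖(1 : Matrix (Fin d) (Fin d) ℂ)‖ ≤ 1 := by
  rw [Matrix.norm_le_iff zero_le_one]
  intro i j
  by_cases h : i = j <;> simp [Matrix.one_apply, h]

lemma matTraceRe (A : Matrix (Fin d) (Fin d) ℂ) : |(Matrix.trace A).re| ≤ d * ‖A‖ := by
  calc |(Matrix.trace A).re| ≤ ‖Matrix.trace A‖ := Complex.abs_re_le_norm _
    _ ≤ ∑ i : Fin d, ‖A i i‖ := norm_sum_le _ _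
    _ ≤ ∑ _i : Fin d, ‖A‖ := Finset.sum_le_sum fun i _ => Matrix.norm_entry_le_entrywise_sup_norm A
    _ = d * ‖A‖ := by simp [mul_comm]

lemma matNormMul (A B : Matrix (Fin d) (Fin d) ℂ) : ‖A * B‖ ≤ d * ‖A‖ * ‖B‖ := by
  have h0 : (0:ℝ) ≤ d * ‖A‖ * ‖B‖ := by positivity
  rw [Matrix.norm_le_iff h0]
  intro i j
  calc ‖(A * B) i j‖ = ‖∑ k, A i k * B k j‖ := by rw [Matrix.mul_apply]
    _ ≤ ∑ k, ‖A i k * B k j‖ := norm_sum_le _ _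
    _ ≤ ∑ _k : Fin d, ‖A‖ * ‖B‖ := Finset.sum_le_sum fun k _ => by
        rw [norm_mul]
        exact mul_le_mul (Matrix.norm_entry_le_entrywise_sup_norm A)
          (Matrix.norm_entry_le_entrywise_sup_norm B) (norm_nonneg _) (norm_nonneg _)
    _ = d * ‖A‖ * ‖B‖ := by simp [mul_assoc]

/-- conjTranspose as a real-linear continuous map. -/
noncomputable def cT (d : ℕ) : Matrix (Fin d) (Fin d) ℂ →L[ℝ] Matrix (Fin d) (Fin d) ℂ :=
  LinearMap.toContinuousLinearMap
  { toFun := fun A => Aᴴ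
    map_add' := fun A B => Matrix.conjTranspose_add A B
    map_smul' := fun r A => by
      ext i j
      simp [Matrix.conjTranspose_apply, Complex.smul_re] }

lemma cT_apply (A : Matrix (Fin d) (Fin d) ℂ) : cT d A = Aᴴ := rfl

/-- `(A, X) ↦ Re Tr (ρ A X)` as a continuous real-bilinear map. -/
noncomputable def trB (ρ : Matrix (Fin d) (Fin d) ℂ) :
    Matrix (Fin d) (Fin d) ℂ →L[ℝ] Matrix (Fin d) (Fin d) ℂ →L[ℝ] ℝ :=
  LinearMap.toContinuousLinearMap <|
    (LinearMap.toContinuousLinearMap.toLinearMap).comp <|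
    LinearMap.mk₂ ℝ (fun A X => (Matrix.trace (ρ * A * X)).re)
      (fun A B X => by simp [Matrix.mul_add, Matrix.add_mul])
      (fun r A X => by
        show (Matrix.trace (ρ * (r • A) * X)).re = r • (Matrix.trace (ρ * A * X)).re
        rw [Matrix.mul_smul, Matrix.smul_mul, Matrix.trace_smul, Complex.smul_re])
      (fun A X Y => by simp [Matrix.mul_add])
      (fun r A X => by
        show (Matrix.trace (ρ * A * (r • X))).re = r • (Matrix.trace (ρ * A * X)).re
        rw [Matrix.mul_smul, Matrix.trace_smul, Complex.smul_re])

lemma trB_apply (ρ A X : Matrix (Fin d) (Fin d) ℂ) :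
    trB ρ A X = (Matrix.trace (ρ * A * X)).re := by
  simp [trB, LinearMap.coe_toContinuousLinearMap']

noncomputable def rfun (x : ℝ) : ℝ := if x = 0 then 1 else Real.log (1+x) / x

lemma rfun_tendsto : Tendsto rfun (nhds 0) (nhds 1) := by
  have h1 : HasDerivAt (fun x : ℝ => Real.log (1+x)) 1 0 := by
    have hlog : HasDerivAt Real.log 1⁻¹ (1 + id (0:ℝ)) := by
      simpa using Real.hasDerivAt_log (one_ne_zero)
    have := hlog.comp 0 ((hasDerivAt_id (0:ℝ)).const_add 1)
    simpa [Function.comp_def] using this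
  rw [hasDerivAt_iff_tendsto_slope] at h1
  have h2 : Tendsto rfun (nhdsWithin 0 {(0:ℝ)}ᶜ) (nhds 1) := by
    refine h1.congr' ?_
    filter_upwards [self_mem_nhdsWithin] with y hy
    have hy' : y ≠ 0 := hy
    simp [slope_def_field, rfun, hy', Real.log_one]
  have h3 : Tendsto rfun (pure (0:ℝ)) (nhds 1) := by
    have : rfun 0 = 1 := by simp [rfun]
    rw [← this]
    exact tendsto_pure_nhds rfun 0
  rw [← nhdsNE_sup_pure (0:ℝ)]
  exact h2.sup h3

lemma rfun_spec (θ G : ℝ) (hθ : θ ≠ 0) :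
    rfun (θ * G) * G = (1/θ) * Real.log (1 + θ * G) := by
  by_cases h : θ * G = 0
  · have hG : G = 0 := by
      rcases mul_eq_zero.1 h with h'|h'
      · exact absurd h' hθ
      · exact h'
    simp [rfun, h, hG]
  · have hG : G ≠ 0 := fun hG => h (by simp [hG])
    field_simp [rfun, h]
    simp only [rfun, if_neg h]; field_simp

lemma exp_sub_one_le (y : ℝ) : Real.exp y - 1 ≤ y * Real.exp y := by
  have h := Real.add_one_le_exp (-y)
  have h2 : Real.exp (-y) * Real.exp y = 1 := by
    rw [← Real.exp_add]; simp
  nlinarith [Real.exp_pos y]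

end Aux

set_option maxHeartbeats 1600000 in
/-- small risk-sensitivity asymptotics (9): if `R θ` solves
`R' = (θ/2) C R`, `R(0) = 1`, then
`(1/θ) ln Re Tr(ρ R_θ(t)ᴴ R_θ(t)) → ∫₀ᵗ Re Tr(ρ C(s)) ds` as `θ → 0⁺`. -/
theorem risk_sensitive_small_theta_asymptotics {d : ℕ}
    (t : ℝ) (ht : 0 < t)
    (ρ : Matrix (Fin d) (Fin d) ℂ) (hρ : IsDensityMatrix ρ)
    (C : ℝ → Matrix (Fin d) (Fin d) ℂ)
    (hCcont : ContinuousOn C (Icc 0 t))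
    (hCherm : ∀ s ∈ Icc (0 : ℝ) t, (C s).IsHermitian)
    (R : ℝ → ℝ → Matrix (Fin d) (Fin d) ℂ)
    (hR0 : ∀ θ : ℝ, 0 ≤ θ → R θ 0 = 1)
    (hR : ∀ θ : ℝ, 0 ≤ θ → ∀ s ∈ Icc (0 : ℝ) t,
      HasDerivWithinAt (R θ) ((θ / 2) • (C s * R θ s)) (Icc (0 : ℝ) t) s) :
    Filter.Tendsto
      (fun θ : ℝ => (1 / θ) * Real.log ((Matrix.trace (ρ * (R θ t)ᴴ * R θ t)).re))
      (nhdsWithin 0 (Set.Ioi 0))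
      (nhds (∫ s in (0 : ℝ)..t, (Matrix.trace (ρ * C s)).re)) := by
  classical
  -- dispatch d = 0
  rcases Nat.eq_zero_or_pos d with hd0 | hd
  · exfalso
    have h0 : ρ.trace = 0 := by
      subst hd0
      simp [Matrix.trace]
    rw [hρ.2] at h0
    exact one_ne_zero h0
  have hd1 : (1:ℝ) ≤ (d:ℝ) := by exact_mod_cast hd
  have hdpos : (0:ℝ) < (d:ℝ) := lt_of_lt_of_le one_pos hd1
  -- bound on C
  obtain ⟨M0, hM0⟩ := (isCompact_Icc : IsCompact (Icc (0:ℝ) t)).exists_bound_of_continuousOn hCcont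
  set M1 : ℝ := |M0| + 1 with hM1def
  have hM1pos : 0 < M1 := by positivity
  have hC : ∀ s ∈ Icc (0:ℝ) t, ‖C s‖ ≤ M1 := fun s hs =>
    (hM0 s hs).trans (by rw [hM1def]; linarith [le_abs_self M0])
  set K₀ : ℝ := ((d:ℝ) * M1 * t / 2) * Real.exp ((d:ℝ) * M1 * t / 2) with hK₀def
  have hK₀ : 0 ≤ K₀ := by positivity
  -- continuity of R θ
  have hRc : ∀ θ : ℝ, 0 ≤ θ → ContinuousOn (R θ) (Icc 0 t) :=
    fun θ hθ s hs => (hR θ hθ s hs).continuousWithinAt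
  -- Gronwall estimate
  have hGron : ∀ θ ∈ Ioc (0:ℝ) 1, ∀ s ∈ Icc (0:ℝ) t, ‖R θ s - 1‖ ≤ θ * K₀ := by
    intro θ hθ s hs
    set K : ℝ := θ * ((d:ℝ) * M1) / 2 with hKdef
    have hKpos : 0 < K :=
      div_pos (mul_pos hθ.1 (mul_pos hdpos hM1pos)) two_pos
    have key : ∀ x ∈ Icc (0:ℝ) t, ‖R θ x - 1‖ ≤ gronwallBound 0 K K (x - 0) := by
      apply norm_le_gronwallBound_of_norm_deriv_right_le
      · exact (hRc θ hθ.1.le).sub continuousOn_const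
      · intro x hx
        have h1 : Icc (0:ℝ) t ∈ nhdsWithin x (Ici x) := Icc_mem_nhdsGE_of_mem hx
        exact ((hR θ hθ.1.le x ⟨hx.1, hx.2.le⟩).sub_const 1).mono_of_mem_nhdsWithin h1
      · simp [hR0 θ hθ.1.le]
      · intro x hx
        have hRx : ‖R θ x‖ ≤ ‖R θ x - 1‖ + 1 := by
          have h2 : R θ x = (R θ x - 1) + 1 := by abel
        -- ‖R‖ ≤ ‖R-1‖ + ‖1‖ ≤ ‖R-1‖ + 1
          calc ‖R θ x‖ = ‖(R θ x - 1) + 1‖ := by rw [← h2]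
            _ ≤ ‖R θ x - 1‖ + ‖(1 : Matrix (Fin d) (Fin d) ℂ)‖ := norm_add_le _ _
            _ ≤ ‖R θ x - 1‖ + 1 := by linarith [matNormOne (d := d)]
        have hxI : x ∈ Icc (0:ℝ) t := ⟨hx.1, hx.2.le⟩
        calc ‖(θ/2) • (C x * R θ x)‖ = (θ/2) * ‖C x * R θ x‖ := by
              rw [norm_smul, Real.norm_eq_abs, abs_of_pos (by linarith [hθ.1])]
          _ ≤ (θ/2) * ((d:ℝ) * ‖C x‖ * ‖R θ x‖) := by
              apply mul_le_mul_of_nonneg_left (matNormMul _ _) (by linarith [hθ.1])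
          _ ≤ (θ/2) * ((d:ℝ) * M1 * (‖R θ x - 1‖ + 1)) := by
              apply mul_le_mul_of_nonneg_left ?_ (by linarith [hθ.1])
              apply mul_le_mul (mul_le_mul_of_nonneg_left (hC x hxI) hdpos.le) hRx
                (norm_nonneg _) (by positivity)
          _ = K * ‖R θ x - 1‖ + K := by rw [hKdef]; ring
    have h2 := key s hs
    rw [sub_zero, gronwallBound_of_K_ne_0 hKpos.ne'] at h2
    simp only [zero_mul, zero_add, div_self hKpos.ne', one_mul] at h2
    -- h2 : ‖R θ s - 1‖ ≤ exp (K * s) - 1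
    have ha : 0 ≤ K * s := mul_nonneg hKpos.le hs.1
    have hb : K * s ≤ θ * ((d:ℝ) * M1 * t / 2) := by
      have := mul_le_mul_of_nonneg_left hs.2 hKpos.le
      calc K * s ≤ K * t := this
        _ = θ * ((d:ℝ) * M1 * t / 2) := by rw [hKdef]; ring
    have hc : θ * ((d:ℝ) * M1 * t / 2) ≤ (d:ℝ) * M1 * t / 2 := by
      nlinarith [hθ.2, hθ.1, hM1pos, hdpos, ht]
    have hexp : Real.exp (K * s) ≤ Real.exp ((d:ℝ) * M1 * t / 2) :=
      Real.exp_le_exp.2 (hb.trans hc)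
    calc ‖R θ s - 1‖ ≤ Real.exp (K * s) - 1 := h2
      _ ≤ (K * s) * Real.exp (K * s) := exp_sub_one_le _
      _ ≤ (θ * ((d:ℝ) * M1 * t / 2)) * Real.exp ((d:ℝ) * M1 * t / 2) := by
          apply mul_le_mul hb hexp (Real.exp_pos _).le (mul_nonneg hθ.1.le (by positivity))
      _ = θ * K₀ := by rw [hK₀def]; ring
  have hRbound : ∀ θ ∈ Ioc (0:ℝ) 1, ∀ s ∈ Icc (0:ℝ) t, ‖R θ s‖ ≤ 1 + K₀ := by
    intro θ hθ s hs
    have h2 : R θ s = (R θ s - 1) + 1 := by abel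
    calc ‖R θ s‖ = ‖(R θ s - 1) + 1‖ := by rw [← h2]
      _ ≤ ‖R θ s - 1‖ + ‖(1 : Matrix (Fin d) (Fin d) ℂ)‖ := norm_add_le _ _
      _ ≤ θ * K₀ + 1 := add_le_add (hGron θ hθ s hs) matNormOne
      _ ≤ 1 + K₀ := by nlinarith [hθ.2, hθ.1, hK₀]
  -- derivative of φ θ s := Re Tr (ρ (R θ s)ᴴ (R θ s))
  have hφderiv : ∀ θ : ℝ, 0 ≤ θ → ∀ s ∈ Icc (0:ℝ) t,
      HasDerivWithinAt (fun u => (Matrix.trace (ρ * (R θ u)ᴴ * R θ u)).re)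
        (θ * (Matrix.trace (ρ * (R θ s)ᴴ * C s * R θ s)).re) (Icc (0:ℝ) t) s := by
    intro θ hθ s hs
    have h1 := hR θ hθ s hs
    have hc : HasDerivWithinAt (fun u => ((trB ρ).comp (cT d)) (R θ u))
        (((trB ρ).comp (cT d)) ((θ/2) • (C s * R θ s))) (Icc (0:ℝ) t) s :=
      by
        letI : NormedAddCommGroup (Matrix (Fin d) (Fin d) ℂ →L[ℝ] ℝ) := ContinuousLinearMap.toNormedAddCommGroup
        letI : NormedSpace ℝ (Matrix (Fin d) (Fin d) ℂ →L[ℝ] ℝ) := ContinuousLinearMap.toNormedSpace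
        exact ((trB ρ).comp (cT d)).hasFDerivAt.comp_hasDerivWithinAt s h1
    have h2 := hc.clm_apply h1
    have hfun : (fun u => (((trB ρ).comp (cT d)) (R θ u)) (R θ u)) =
        (fun u => (Matrix.trace (ρ * (R θ u)ᴴ * R θ u)).re) := by
      funext u
      rw [ContinuousLinearMap.comp_apply, cT_apply, trB_apply]
    have hval : (((trB ρ).comp (cT d)) ((θ/2) • (C s * R θ s))) (R θ s)
        + (((trB ρ).comp (cT d)) (R θ s)) ((θ/2) • (C s * R θ s))
        = θ * (Matrix.trace (ρ * (R θ s)ᴴ * C s * R θ s)).re := by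
      rw [ContinuousLinearMap.comp_apply, ContinuousLinearMap.comp_apply]
      rw [_root_.map_smul, _root_.map_smul, ContinuousLinearMap.smul_apply, _root_.map_smul]
      rw [cT_apply, cT_apply, trB_apply, trB_apply]
      rw [Matrix.conjTranspose_mul, (hCherm s hs).eq]
      have e1 : ρ * ((R θ s)ᴴ * C s) * R θ s = ρ * (R θ s)ᴴ * C s * R θ s := by
        noncomm_ring
      have e2 : ρ * (R θ s)ᴴ * (C s * R θ s) = ρ * (R θ s)ᴴ * C s * R θ s := by
        noncomm_ring
      rw [e1, e2]
      simp [smul_eq_mul]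
      ring
    rw [← hfun]
    rw [← hval]
    exact h2
  -- continuity helpers
  have hmulOn : ∀ {f g : ℝ → Matrix (Fin d) (Fin d) ℂ},
      ContinuousOn f (Icc (0:ℝ) t) → ContinuousOn g (Icc (0:ℝ) t) →
      ContinuousOn (fun x => f x * g x) (Icc (0:ℝ) t) := by
    intro f g hf hg
    exact (continuous_fst.matrix_mul continuous_snd).comp_continuousOn (hf.prodMk hg)
  have htraceRe : Continuous (fun A : Matrix (Fin d) (Fin d) ℂ => (Matrix.trace A).re) :=
    Complex.continuous_re.comp (continuous_id.matrix_trace)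
  have hψcont : ∀ θ : ℝ, 0 ≤ θ →
      ContinuousOn (fun s => (Matrix.trace (ρ * (R θ s)ᴴ * C s * R θ s)).re) (Icc (0:ℝ) t) := by
    intro θ hθ
    have hH : ContinuousOn (fun s => (R θ s)ᴴ) (Icc (0:ℝ) t) :=
      (continuous_id.matrix_conjTranspose).comp_continuousOn (hRc θ hθ)
    exact htraceRe.comp_continuousOn
      (hmulOn (hmulOn (hmulOn continuousOn_const hH) hCcont) (hRc θ hθ))
  have hfcont : ContinuousOn (fun s => (Matrix.trace (ρ * C s)).re) (Icc (0:ℝ) t) :=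
    htraceRe.comp_continuousOn (hmulOn continuousOn_const hCcont)
  -- FTC
  have hE : ∀ θ : ℝ, 0 ≤ θ → (Matrix.trace (ρ * (R θ t)ᴴ * R θ t)).re
      = 1 + θ * ∫ s in (0:ℝ)..t, (Matrix.trace (ρ * (R θ s)ᴴ * C s * R θ s)).re := by
    intro θ hθ
    have hH : ContinuousOn (fun s => (R θ s)ᴴ) (Icc (0:ℝ) t) :=
      (continuous_id.matrix_conjTranspose).comp_continuousOn (hRc θ hθ)
    have hcontφ : ContinuousOn (fun u => (Matrix.trace (ρ * (R θ u)ᴴ * R θ u)).re) (Icc (0:ℝ) t) :=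
      htraceRe.comp_continuousOn (hmulOn (hmulOn continuousOn_const hH) (hRc θ hθ))
    have hint : IntervalIntegrable
        (fun s => θ * (Matrix.trace (ρ * (R θ s)ᴴ * C s * R θ s)).re)
        MeasureTheory.volume 0 t := by
      apply ContinuousOn.intervalIntegrable
      rw [uIcc_of_le ht.le]
      exact continuousOn_const.mul (hψcont θ hθ)
    have hder : ∀ x ∈ Ioo (0:ℝ) t,
        HasDerivWithinAt (fun u => (Matrix.trace (ρ * (R θ u)ᴴ * R θ u)).re)
          (θ * (Matrix.trace (ρ * (R θ x)ᴴ * C x * R θ x)).re) (Ioi x) x := by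
      intro x hx
      have h1 : Icc (0:ℝ) t ∈ nhdsWithin x (Ioi x) :=
        mem_of_superset (Ioc_mem_nhdsGT_of_mem ⟨le_rfl, hx.2⟩) (Ioc_subset_Icc_self.trans
          (Icc_subset_Icc hx.1.le le_rfl))
      exact (hφderiv θ hθ x ⟨hx.1.le, hx.2.le⟩).mono_of_mem_nhdsWithin h1
    have hFTC := intervalIntegral.integral_eq_sub_of_hasDeriv_right_of_le ht.le hcontφ hder hint
    have hφ0 : (Matrix.trace (ρ * (R θ 0)ᴴ * R θ 0)).re = 1 := by
      rw [hR0 θ hθ]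
      simp [hρ.2]
    rw [hφ0] at hFTC
    rw [intervalIntegral.integral_const_mul] at hFTC
    linarith [hFTC]
  -- the bound on ψ - f
  set c₀ : ℝ := (d:ℝ)^4 * ‖ρ‖ * K₀ * M1 * (1+K₀) + (d:ℝ)^3 * ‖ρ‖ * M1 * K₀ with hc₀def
  have hψbound : ∀ θ ∈ Ioc (0:ℝ) 1, ∀ s ∈ Icc (0:ℝ) t,
      |(Matrix.trace (ρ * (R θ s)ᴴ * C s * R θ s)).re - (Matrix.trace (ρ * C s)).re| ≤ θ * c₀ := by
    intro θ hθ s hs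
    set X := R θ s with hXdef
    have hX1 : ‖X - 1‖ ≤ θ * K₀ := hGron θ hθ s hs
    have hX : ‖X‖ ≤ 1 + K₀ := hRbound θ hθ s hs
    have hXH : ‖Xᴴ - 1‖ ≤ θ * K₀ := by
      have : Xᴴ - 1 = (X - 1)ᴴ := by
        rw [Matrix.conjTranspose_sub, Matrix.conjTranspose_one]
      rw [this, Matrix.norm_conjTranspose]
      exact hX1
    have hsplit : ρ * Xᴴ * C s * X - ρ * C s
        = ρ * (Xᴴ - 1) * C s * X + ρ * C s * (X - 1) := by noncomm_ring
    have htr : (Matrix.trace (ρ * Xᴴ * C s * X)).re - (Matrix.trace (ρ * C s)).re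
        = (Matrix.trace (ρ * (Xᴴ - 1) * C s * X)).re + (Matrix.trace (ρ * C s * (X - 1))).re := by
      rw [← Complex.add_re, ← Matrix.trace_add, ← hsplit, Matrix.trace_sub, Complex.sub_re]
    rw [htr]
    have hCs : ‖C s‖ ≤ M1 := hC s hs
    have hθ0 : (0:ℝ) ≤ θ := hθ.1.le
    have hθK : (0:ℝ) ≤ θ * K₀ := mul_nonneg hθ0 hK₀
    have m1 : ‖ρ * (Xᴴ - 1)‖ ≤ (d:ℝ) * ‖ρ‖ * (θ * K₀) :=
      (matNormMul _ _).trans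
        (mul_le_mul_of_nonneg_left hXH (mul_nonneg hdpos.le (norm_nonneg _)))
    have m2 : ‖ρ * (Xᴴ - 1) * C s‖ ≤ (d:ℝ) * ((d:ℝ) * ‖ρ‖ * (θ * K₀)) * M1 :=
      (matNormMul _ _).trans
        (mul_le_mul (mul_le_mul_of_nonneg_left m1 hdpos.le) hCs (norm_nonneg _)
          (mul_nonneg hdpos.le (mul_nonneg (mul_nonneg hdpos.le (norm_nonneg _)) hθK)))
    have m3 : ‖ρ * (Xᴴ - 1) * C s * X‖
        ≤ (d:ℝ) * ((d:ℝ) * ((d:ℝ) * ‖ρ‖ * (θ * K₀)) * M1) * (1 + K₀) :=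
      (matNormMul _ _).trans
        (mul_le_mul (mul_le_mul_of_nonneg_left m2 hdpos.le) hX (norm_nonneg _)
          (mul_nonneg hdpos.le (mul_nonneg
            (mul_nonneg hdpos.le (mul_nonneg (mul_nonneg hdpos.le (norm_nonneg _)) hθK))
            hM1pos.le)))
    have n1 : |(Matrix.trace (ρ * (Xᴴ - 1) * C s * X)).re|
        ≤ (d:ℝ) * ((d:ℝ) * ((d:ℝ) * ((d:ℝ) * ‖ρ‖ * (θ * K₀)) * M1) * (1 + K₀)) :=
      (matTraceRe _).trans (mul_le_mul_of_nonneg_left m3 hdpos.le)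
    have m4 : ‖ρ * C s‖ ≤ (d:ℝ) * ‖ρ‖ * M1 :=
      (matNormMul _ _).trans
        (mul_le_mul_of_nonneg_left hCs (mul_nonneg hdpos.le (norm_nonneg _)))
    have m5 : ‖ρ * C s * (X - 1)‖ ≤ (d:ℝ) * ((d:ℝ) * ‖ρ‖ * M1) * (θ * K₀) :=
      (matNormMul _ _).trans
        (mul_le_mul (mul_le_mul_of_nonneg_left m4 hdpos.le) hX1 (norm_nonneg _)
          (mul_nonneg hdpos.le (mul_nonneg (mul_nonneg hdpos.le (norm_nonneg _)) hM1pos.le)))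
    have n2 : |(Matrix.trace (ρ * C s * (X - 1))).re|
        ≤ (d:ℝ) * ((d:ℝ) * ((d:ℝ) * ‖ρ‖ * M1) * (θ * K₀)) :=
      (matTraceRe _).trans (mul_le_mul_of_nonneg_left m5 hdpos.le)
    calc |(Matrix.trace (ρ * (Xᴴ - 1) * C s * X)).re + (Matrix.trace (ρ * C s * (X - 1))).re|
        ≤ |(Matrix.trace (ρ * (Xᴴ - 1) * C s * X)).re| + |(Matrix.trace (ρ * C s * (X - 1))).re| :=
          abs_add_le _ _
      _ ≤ (d:ℝ) * ((d:ℝ) * ((d:ℝ) * ((d:ℝ) * ‖ρ‖ * (θ * K₀)) * M1) * (1 + K₀))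
          + (d:ℝ) * ((d:ℝ) * ((d:ℝ) * ‖ρ‖ * M1) * (θ * K₀)) := add_le_add n1 n2
      _ = θ * c₀ := by rw [hc₀def]; ring
  -- integral bound
  have hGL : ∀ θ ∈ Ioc (0:ℝ) 1,
      |(∫ s in (0:ℝ)..t, (Matrix.trace (ρ * (R θ s)ᴴ * C s * R θ s)).re)
        - ∫ s in (0:ℝ)..t, (Matrix.trace (ρ * C s)).re| ≤ (c₀ * t) * θ := by
    intro θ hθ
    have hint1 : IntervalIntegrable (fun s => (Matrix.trace (ρ * (R θ s)ᴴ * C s * R θ s)).re)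
        MeasureTheory.volume 0 t := by
      apply ContinuousOn.intervalIntegrable
      rw [uIcc_of_le ht.le]
      exact hψcont θ hθ.1.le
    have hint2 : IntervalIntegrable (fun s => (Matrix.trace (ρ * C s)).re)
        MeasureTheory.volume 0 t := by
      apply ContinuousOn.intervalIntegrable
      rw [uIcc_of_le ht.le]
      exact hfcont
    rw [← intervalIntegral.integral_sub hint1 hint2]
    have hb := intervalIntegral.norm_integral_le_of_norm_le_const
      (C := θ * c₀)
      (f := fun s => (Matrix.trace (ρ * (R θ s)ᴴ * C s * R θ s)).re - (Matrix.trace (ρ * C s)).re)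
      (a := 0) (b := t) ?_
    · rw [Real.norm_eq_abs] at hb
      calc |∫ s in (0:ℝ)..t, ((Matrix.trace (ρ * (R θ s)ᴴ * C s * R θ s)).re
            - (Matrix.trace (ρ * C s)).re)| ≤ θ * c₀ * |t - 0| := hb
        _ = (c₀ * t) * θ := by rw [sub_zero, abs_of_pos ht]; ring
    · intro x hx
      rw [Set.uIoc_of_le ht.le] at hx
      rw [Real.norm_eq_abs]
      exact hψbound θ hθ x ⟨hx.1.le, hx.2⟩
  -- assemble
  set G : ℝ → ℝ := fun θ => ∫ s in (0:ℝ)..t, (Matrix.trace (ρ * (R θ s)ᴴ * C s * R θ s)).re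
    with hGdef
  set L : ℝ := ∫ s in (0:ℝ)..t, (Matrix.trace (ρ * C s)).re with hLdef
  have hGtendsto : Tendsto G (nhdsWithin 0 (Ioi 0)) (nhds L) := by
    rw [← tendsto_sub_nhds_zero_iff]
    apply squeeze_zero_norm' (a := fun θ => (c₀ * t) * θ)
    · filter_upwards [Ioc_mem_nhdsGT_of_mem
        (show (0:ℝ) ∈ Ico (0:ℝ) 1 from ⟨le_rfl, one_pos⟩)] with θ hθ
      rw [Real.norm_eq_abs]
      exact hGL θ hθ
    · have hid : Tendsto (fun θ : ℝ => θ) (nhdsWithin 0 (Ioi 0)) (nhds 0) :=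
        tendsto_id.mono_left nhdsWithin_le_nhds
      simpa using (tendsto_const_nhds (x := c₀ * t)).mul hid
  have hθG : Tendsto (fun θ => θ * G θ) (nhdsWithin 0 (Ioi 0)) (nhds 0) := by
    have hid : Tendsto (fun θ : ℝ => θ) (nhdsWithin 0 (Ioi 0)) (nhds 0) :=
      tendsto_id.mono_left nhdsWithin_le_nhds
    simpa using hid.mul hGtendsto
  have hr : Tendsto (fun θ => rfun (θ * G θ)) (nhdsWithin 0 (Ioi 0)) (nhds 1) :=
    rfun_tendsto.comp hθG
  have hfinal := hr.mul hGtendsto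
  rw [one_mul] at hfinal
  have hFeq : ∀ᶠ θ in nhdsWithin 0 (Ioi 0),
      rfun (θ * G θ) * G θ
        = (1 / θ) * Real.log ((Matrix.trace (ρ * (R θ t)ᴴ * R θ t)).re) := by
    filter_upwards [self_mem_nhdsWithin] with θ hθ
    have hθ0 : (0:ℝ) < θ := hθ
    rw [hE θ hθ0.le, rfun_spec θ (G θ) hθ0.ne']
  exact hfinal.congr' hFeq
end

section
/- Let ε ≥ 0, n ≥ 0, μ > 0 and α > 0. Then the function θ ↦ (ε + (n/2)·(μ − √(μ² − 4·θ·α·μ)))/θ is convex on the interval (0, μ/(4α)]. -/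
open Set Real

lemma inv_convexOn : ConvexOn ℝ (Set.Ioi (0:ℝ)) (fun x : ℝ => x⁻¹) := by
  have h := (strictConvexOn_zpow (m := -1) (by norm_num) (by norm_num)).convexOn
  simpa [zpow_neg, zpow_one] using h

/-- convexity of the robust performance bound
`θ ↦ (ε + (n/2)(μ − √(μ² − 4θαμ)))/θ` on `(0, μ/(4α)]`. -/
theorem robust_bound_convex
    (ε n μ α : ℝ) (hε : 0 ≤ ε) (hn : 0 ≤ n) (hμ : 0 < μ) (hα : 0 < α) :
    ConvexOn ℝ (Set.Ioc 0 (μ / (4 * α)))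
      (fun θ : ℝ => (ε + n / 2 * (μ - Real.sqrt (μ ^ 2 - 4 * θ * α * μ))) / θ) := by
  set s : Set ℝ := Set.Ioc 0 (μ / (4 * α)) with hs
  have hconv : Convex ℝ s := convex_Ioc _ _
  have hmem : ∀ θ ∈ s, 0 < θ ∧ 0 ≤ μ ^ 2 - 4 * θ * α * μ := by
    intro θ hθ
    obtain ⟨h1, h2⟩ := hθ
    refine ⟨h1, ?_⟩
    have h3 : θ * (4 * α) ≤ μ := (le_div_iff₀ (by positivity)).mp h2
    nlinarith
  -- S θ = μ + sqrt(μ² - 4θαμ), positive and concave on s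
  set S : ℝ → ℝ := fun θ => μ + Real.sqrt (μ ^ 2 - 4 * θ * α * μ) with hS
  have hSpos : ∀ θ ∈ s, 0 < S θ := by
    intro θ hθ
    have := Real.sqrt_nonneg (μ ^ 2 - 4 * θ * α * μ)
    simp only [hS]; linarith
  -- convexity of q θ = (S θ)⁻¹
  have hq : ConvexOn ℝ s (fun θ => (S θ)⁻¹) := by
    refine ⟨hconv, ?_⟩
    intro x hx y hy a b ha hb hab
    have hxm := hmem x hx; have hym := hmem y hy
    have hmemc : a • x + b • y ∈ s := hconv hx hy ha hb hab
    have hSx := hSpos x hx; have hSy := hSpos y hy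
    -- concavity of S
    have hsqrt : a * Real.sqrt (μ ^ 2 - 4 * x * α * μ) + b * Real.sqrt (μ ^ 2 - 4 * y * α * μ)
        ≤ Real.sqrt (μ ^ 2 - 4 * (a • x + b • y) * α * μ) := by
      have harg : μ ^ 2 - 4 * (a • x + b • y) * α * μ
          = a * (μ ^ 2 - 4 * x * α * μ) + b * (μ ^ 2 - 4 * y * α * μ) := by
        simp only [smul_eq_mul]; nlinarith [hab]
      rw [harg]
      have hcc := Real.strictConcaveOn_sqrt.concaveOn
      have := hcc.2 (Set.mem_Ici.mpr hxm.2) (Set.mem_Ici.mpr hym.2) ha hb hab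
      simpa [smul_eq_mul] using this
    have hSc : a * S x + b * S y ≤ S (a • x + b • y) := by
      simp only [hS]
      have : a * μ + b * μ = μ := by nlinarith [hab]
      nlinarith [hsqrt]
    have hcombpos : 0 < a * S x + b * S y := by
      rcases lt_or_eq_of_le ha with ha' | ha'
      · have : 0 < a * S x := mul_pos ha' hSx
        nlinarith [mul_nonneg hb hSy.le]
      · have hb1 : b = 1 := by linarith
        rw [← ha', hb1]; simpa using hSy
    have step1 : (S (a • x + b • y))⁻¹ ≤ (a * S x + b * S y)⁻¹ :=
      inv_anti₀ hcombpos hSc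
    have step2 : (a * S x + b * S y)⁻¹ ≤ a * (S x)⁻¹ + b * (S y)⁻¹ := by
      have := inv_convexOn.2 (Set.mem_Ioi.mpr hSx) (Set.mem_Ioi.mpr hSy) ha hb hab
      simpa [smul_eq_mul] using this
    calc (S (a • x + b • y))⁻¹ ≤ (a * S x + b * S y)⁻¹ := step1
      _ ≤ a * (S x)⁻¹ + b * (S y)⁻¹ := step2
      _ = a • (S x)⁻¹ + b • (S y)⁻¹ := by simp [smul_eq_mul]
  -- convexity of ε * θ⁻¹
  have hinv : ConvexOn ℝ s (fun θ : ℝ => ε * θ⁻¹) := by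
    have h1 : ConvexOn ℝ s (fun θ : ℝ => θ⁻¹) :=
      inv_convexOn.subset (fun θ hθ => (hmem θ hθ).1) hconv
    simpa [smul_eq_mul] using h1.smul hε
  -- combined convex function
  have hg : ConvexOn ℝ s (fun θ => ε * θ⁻¹ + (n / 2 * (4 * α * μ)) * (S θ)⁻¹) := by
    have h2 : ConvexOn ℝ s (fun θ => (n / 2 * (4 * α * μ)) * (S θ)⁻¹) := by
      have := hq.smul (c := n / 2 * (4 * α * μ)) (by positivity)
      simpa [smul_eq_mul] using this
    exact hinv.add h2
  refine hg.congr ?_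
  intro θ hθ
  obtain ⟨hθ0, hθarg⟩ := hmem θ hθ
  simp only [hS]
  set r := Real.sqrt (μ ^ 2 - 4 * θ * α * μ) with hr
  have hr2 : r ^ 2 = μ ^ 2 - 4 * θ * α * μ := Real.sq_sqrt hθarg
  have hr0 : 0 ≤ r := Real.sqrt_nonneg _
  have hμr : 0 < μ + r := by linarith
  field_simp
  linear_combination n * hr2
end

section
/- Let n and m be positive integers with m even, let Θ be a real antisymmetric invertible n×n matrix, and let J be the real antisymmetric m×m matrix J = [[0, I_{m/2}], [−I_{m/2}, 0]]. Then a pair of real matrices A (n×n) and B (n×m) satisfies the physical realizability equation A·Θ + Θ·Aᵀ + B·J·Bᵀ = 0 if and only if there exist a real symmetric n×n matrix K and a real m×n matrix M such that A = 2·Θ·(K + Mᵀ·J·M) and B = 2·Θ·Mᵀ. -/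
/-!
Write `A = 2Θ X` and `B = 2Θ N`, which is always possible since `Θ` is invertible. Because `Θ` is
antisymmetric, the realizability expression becomes `2Θ (X - Xᵀ - 2 N J Nᵀ) Θ`, so realizability
says that the antisymmetric part of `X` is `N J Nᵀ`. As `N J Nᵀ` is itself antisymmetric, this is
exactly the symmetry of `K = X - N J Nᵀ`, and `M = Nᵀ`.
-/

open Matrix

section CommRing

variable {R m n : Type*} [CommRing R] [Fintype m]

theorem Matrix.transpose_mul_mul_transpose_of_transpose_eq_neg {J : Matrix m m R}
    (hJ : Jᵀ = -J) (N : Matrix n m R) : (N * J * Nᵀ)ᵀ = -(N * J * Nᵀ) := by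
  simp only [transpose_mul, transpose_transpose, hJ, Matrix.neg_mul, Matrix.mul_neg,
    Matrix.mul_assoc]

theorem Matrix.transpose_sub_mul_mul_transpose_eq_iff {J : Matrix m m R} (hJ : Jᵀ = -J)
    (X : Matrix n n R) (N : Matrix n m R) :
    (X - N * J * Nᵀ)ᵀ = X - N * J * Nᵀ ↔ X - Xᵀ - (2 : R) • (N * J * Nᵀ) = 0 := by
  rw [transpose_sub, transpose_mul_mul_transpose_of_transpose_eq_neg hJ, eq_comm, ← sub_eq_zero]
  constructor <;> intro h <;> linear_combination (norm := module) h

theorem realizability_expr_eq [Fintype n] {Θ : Matrix n n R} (hΘ : Θᵀ = -Θ) (J : Matrix m m R)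
    (X : Matrix n n R) (N : Matrix n m R) :
    (2 : R) • (Θ * X) * Θ + Θ * ((2 : R) • (Θ * X))ᵀ +
        (2 : R) • (Θ * N) * J * ((2 : R) • (Θ * N))ᵀ =
      (2 : R) • (Θ * (X - Xᵀ - (2 : R) • (N * J * Nᵀ)) * Θ) := by
  simp only [transpose_smul, transpose_mul, hΘ, Matrix.smul_mul, Matrix.mul_smul,
    Matrix.mul_neg, smul_neg, mul_sub, sub_mul, smul_sub, Matrix.mul_assoc]
  module

end CommRing

theorem Matrix.exists_eq_smul_mul_of_isUnit_det {𝕜 m n : Type*} [Field 𝕜] [Fintype n]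
    [DecidableEq n] {Θ : Matrix n n 𝕜} (hΘ : IsUnit Θ.det) {c : 𝕜} (hc : c ≠ 0)
    (A : Matrix n m 𝕜) : ∃ X : Matrix n m 𝕜, A = c • (Θ * X) :=
  ⟨c⁻¹ • (Θ⁻¹ * A), by rw [Matrix.mul_smul, ← Matrix.mul_assoc, mul_nonsing_inv Θ hΘ,
    Matrix.one_mul, smul_smul, mul_inv_cancel₀ hc, one_smul]⟩

theorem physical_realizability_parameterization_general {n k : ℕ}
    (Θ : Matrix (Fin n) (Fin n) ℝ) (hΘanti : Θᵀ = -Θ) (hΘinv : IsUnit Θ.det)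
    (J : Matrix (Fin k ⊕ Fin k) (Fin k ⊕ Fin k) ℝ)
    (hJ : J = Matrix.fromBlocks 0 1 (-1) 0)
    (A : Matrix (Fin n) (Fin n) ℝ) (B : Matrix (Fin n) (Fin k ⊕ Fin k) ℝ) :
    A * Θ + Θ * Aᵀ + B * J * Bᵀ = 0 ↔
      ∃ (K : Matrix (Fin n) (Fin n) ℝ) (M : Matrix (Fin k ⊕ Fin k) (Fin n) ℝ),
        Kᵀ = K ∧ A = (2 : ℝ) • (Θ * (K + Mᵀ * J * M)) ∧ B = (2 : ℝ) • (Θ * Mᵀ) := by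
  have hJt : Jᵀ = -J := by
    -- Mathlib's symplectic `J (Fin k) ℝ` is `fromBlocks 0 (-1) 1 0`, the negative of ours.
    rw [hJ, ← neg_neg (fromBlocks _ _ _ _), fromBlocks_neg, neg_zero, neg_neg, transpose_neg]
    exact congrArg Neg.neg (J_transpose (Fin k) ℝ)
  have hcancel : ∀ Y : Matrix (Fin n) (Fin n) ℝ, (2 : ℝ) • (Θ * Y * Θ) = 0 ↔ Y = 0 := fun Y => by
    have hΘ : IsUnit Θ := (isUnit_iff_isUnit_det Θ).mpr hΘinv
    rw [smul_eq_zero_iff_right two_ne_zero, hΘ.mul_left_eq_zero, hΘ.mul_right_eq_zero]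
  constructor
  · intro h
    obtain ⟨X, rfl⟩ := exists_eq_smul_mul_of_isUnit_det hΘinv two_ne_zero A
    obtain ⟨N, rfl⟩ := exists_eq_smul_mul_of_isUnit_det hΘinv two_ne_zero B
    rw [realizability_expr_eq hΘanti, hcancel, ← transpose_sub_mul_mul_transpose_eq_iff hJt] at h
    exact ⟨X - N * J * Nᵀ, Nᵀ, h, by rw [transpose_transpose, sub_add_cancel],
      by rw [transpose_transpose]⟩
  · rintro ⟨K, M, hK, rfl, rfl⟩
    rw [realizability_expr_eq hΘanti, hcancel, ← transpose_sub_mul_mul_transpose_eq_iff hJt,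
      transpose_transpose, add_sub_cancel_right, hK]

/-- physical realizability (21) ⟺ parameterization (22): with an even
number `m = k + k` of field variables (indexed by `Fin k ⊕ Fin k`),
`J = [[0, I], [−I, 0]]`, and `Θ` real antisymmetric invertible, a pair `(A, B)`
satisfies `AΘ + ΘAᵀ + BJBᵀ = 0` iff `A = 2Θ(K + MᵀJM)`, `B = 2ΘMᵀ` for some real
symmetric `K` and real `M`. -/
theorem physical_realizability_parameterization {n k : ℕ} (hn : 0 < n) (hk : 0 < k)
    (Θ : Matrix (Fin n) (Fin n) ℝ) (hΘanti : Θᵀ = -Θ) (hΘinv : IsUnit Θ.det)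
    (J : Matrix (Fin k ⊕ Fin k) (Fin k ⊕ Fin k) ℝ)
    (hJ : J = Matrix.fromBlocks 0 1 (-1) 0)
    (A : Matrix (Fin n) (Fin n) ℝ) (B : Matrix (Fin n) (Fin k ⊕ Fin k) ℝ) :
    A * Θ + Θ * Aᵀ + B * J * Bᵀ = 0 ↔
      ∃ (K : Matrix (Fin n) (Fin n) ℝ) (M : Matrix (Fin k ⊕ Fin k) (Fin n) ℝ),
        Kᵀ = K ∧ A = (2 : ℝ) • (Θ * (K + Mᵀ * J * M)) ∧ B = (2 : ℝ) • (Θ * Mᵀ) :=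
  physical_realizability_parameterization_general Θ hΘanti hΘinv J hJ A B
end
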